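/- arXiv:2404.03530 — 3 statements merged into one kernel-verified Lean document; each statement's English description precedes it below -/
import Mathlib

section
/- Let f_1,...,f_m be homogeneous polynomials of positive degrees d_1,...,d_m in R = K[x_1,...,x_n], with I = ⟨f_1,...,f_m⟩ and D = d_reg(I) finite. Then (f_1,...,f_m) is cryptographic semi-regular if and only if H_1(K_•(f_1,...,f_m))_d = 0 for all d ≤ D − 1, if and only if HS_{R/I}(z) = [∏_{j=1}^m (1-z^{d_j})/(1-z)^n], where [·] truncates the power series after the last consecutive positive coefficient. -/
open MvPolynomial

namespace GBPaper

/-- The dimension of the degree-`d` homogeneous piece of `R/I`,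
where `R = K[x_i : i ∈ σ]`. -/
noncomputable def hilbertFn (K : Type*) [Field K] {σ : Type*}
    (I : Ideal (MvPolynomial σ K)) (d : ℕ) : ℕ :=
  Module.finrank K
    ((MvPolynomial.homogeneousSubmodule σ K d).map
      (Ideal.Quotient.mkₐ K I).toLinearMap)

/-- An ideal is homogeneous iff it contains all homogeneous components of its elements. -/
def IsHomogeneousIdeal {K : Type*} [Field K] {σ : Type*}
    (I : Ideal (MvPolynomial σ K)) : Prop :=
  ∀ f ∈ I, ∀ d : ℕ, MvPolynomial.homogeneousComponent d f ∈ I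

/-- The degree of regularity: the least `d` with `R_d = I_d`. -/
noncomputable def degReg (K : Type*) [Field K] {σ : Type*}
    (I : Ideal (MvPolynomial σ K)) : ℕ :=
  sInf {d : ℕ | ∀ f : MvPolynomial σ K, f.IsHomogeneous d → f ∈ I}

/-- The generalized degree of regularity: the least `d₀` from which on the Hilbert
function of `R/I` is constant. -/
noncomputable def gdegReg (K : Type*) [Field K] {σ : Type*}
    (I : Ideal (MvPolynomial σ K)) : ℕ :=
  sInf {d₀ : ℕ | ∀ d : ℕ, d₀ ≤ d → hilbertFn K I d = hilbertFn K I d₀}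

/-- The leading monomial (leading exponent) of a polynomial with respect to a
monomial order. -/
noncomputable def lm {K : Type*} [Field K] {σ : Type*} (m : MonomialOrder σ)
    (f : MvPolynomial σ K) : σ →₀ ℕ :=
  m.toSyn.symm (f.support.sup fun s => m.toSyn s)

/-- A monomial order is graded (degree-compatible) if it refines total degree. -/
def MonIsGraded {σ : Type*} (m : MonomialOrder σ) : Prop :=
  ∀ a b : σ →₀ ℕ, a.degree < b.degree → m.toSyn a < m.toSyn b

/-- `G` is the reduced Gröbner basis of `I` with respect to the monomial order `m`. -/
structure IsReducedGB {K : Type*} [Field K] {σ : Type*} (m : MonomialOrder σ)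
    (I : Ideal (MvPolynomial σ K)) (G : Finset (MvPolynomial σ K)) : Prop where
  subset : (G : Set (MvPolynomial σ K)) ⊆ I
  zero_not_mem : (0 : MvPolynomial σ K) ∉ G
  monic : ∀ g ∈ G, MvPolynomial.coeff (lm m g) g = 1
  isGB : ∀ f ∈ I, f ≠ 0 → ∃ g ∈ G, lm m g ≤ lm m f
  reduced : ∀ g ∈ G, ∀ g' ∈ G, g ≠ g' → ∀ s ∈ g.support, ¬ lm m g' ≤ s

/-- The degree reverse lexicographic order with `x_0 ≻ x_1 ≻ ⋯`. -/
def IsDegRevLex {n : ℕ} (m : MonomialOrder (Fin n)) : Prop :=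
  ∀ a b : Fin n →₀ ℕ, m.toSyn a < m.toSyn b ↔
    (a.degree < b.degree ∨
      (a.degree = b.degree ∧ ∃ i, b i < a i ∧ ∀ j, i < j → a j = b j))

/-- Restriction of an exponent vector on `n+1` variables to the first `n` variables. -/
noncomputable def restr {n : ℕ} (a : Fin (n + 1) →₀ ℕ) : Fin n →₀ ℕ :=
  Finsupp.equivFunOnFinite.symm fun i => a i.castSucc

/-- Extension of an exponent vector on `n` variables to `n+1` variables (with
`y`-exponent `0`). -/
noncomputable def extX {n : ℕ} (a : Fin n →₀ ℕ) : Fin (n + 1) →₀ ℕ :=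
  Finsupp.embDomain Fin.castSuccEmb a

/-- `m'` is the homogenization (w.r.t. the last variable `y`) of the graded
monomial order `m₀`: it compares first total degrees, then the `X`-parts using `m₀`. -/
def IsHomogenizationOrder {n : ℕ} (m' : MonomialOrder (Fin (n + 1)))
    (m₀ : MonomialOrder (Fin n)) : Prop :=
  ∀ a b : Fin (n + 1) →₀ ℕ, m'.toSyn a < m'.toSyn b ↔
    (a.degree < b.degree ∨
      (a.degree = b.degree ∧ m₀.toSyn (restr a) < m₀.toSyn (restr b)))

/-- The top part (maximal total degree part) of a polynomial. -/
noncomputable def topPart {K : Type*} [Field K] {σ : Type*}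
    (f : MvPolynomial σ K) : MvPolynomial σ K :=
  MvPolynomial.homogeneousComponent f.totalDegree f

/-- The homogenization of `f ∈ K[x_1,…,x_n]` by the extra (last) variable `y`. -/
noncomputable def homog {K : Type*} [Field K] {n : ℕ}
    (f : MvPolynomial (Fin n) K) : MvPolynomial (Fin (n + 1)) K :=
  ∑ s ∈ f.support,
    MvPolynomial.monomial
      (extX s + Finsupp.single (Fin.last n) (f.totalDegree - s.degree))
      (f.coeff s)

/-- The last variable `y` used for homogenization. -/
noncomputable def yvar (K : Type*) [Field K] (n : ℕ) : MvPolynomial (Fin (n + 1)) K :=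
  MvPolynomial.X (Fin.last n)

/-- Substituting `y = 0`, the "top part" of a homogeneous polynomial in `R[y]`. -/
noncomputable def setYZero {K : Type*} [Field K] {n : ℕ}
    (g : MvPolynomial (Fin (n + 1)) K) : MvPolynomial (Fin (n + 1)) K :=
  MvPolynomial.aeval
    (fun i => if i = Fin.last n then 0 else MvPolynomial.X i) g

/-- The ideal generated by the polynomials `f j` for `j < i`. -/
noncomputable def prevIdeal {K : Type*} [Field K] {σ : Type*} {M : ℕ}
    (f : Fin M → MvPolynomial σ K) (i : Fin M) : Ideal (MvPolynomial σ K) :=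
  Ideal.span (f '' {j | j < i})

/-- `d`-regularity of a sequence of homogeneous polynomials of degrees `dg`. -/
def IsDRegularSeq {K : Type*} [Field K] {σ : Type*} {M : ℕ}
    (f : Fin M → MvPolynomial σ K) (dg : Fin M → ℕ) (d : ℕ) : Prop :=
  ∀ i : Fin M, ∀ g : MvPolynomial σ K, ∀ e : ℕ,
    g.IsHomogeneous e → e + dg i < d →
    g * f i ∈ prevIdeal f i → g ∈ prevIdeal f i

/-- Semi-regularity (Pardue): each multiplication map on graded pieces of the
successive quotients is injective or surjective. -/
def IsSemiRegularSeq {K : Type*} [Field K] {σ : Type*} {M : ℕ}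
    (f : Fin M → MvPolynomial σ K) (dg : Fin M → ℕ) : Prop :=
  ∀ i : Fin M, ∀ t : ℕ, dg i ≤ t →
    (∀ g : MvPolynomial σ K, g.IsHomogeneous (t - dg i) →
        g * f i ∈ prevIdeal f i → g ∈ prevIdeal f i) ∨
    (∀ h : MvPolynomial σ K, h.IsHomogeneous t →
        ∃ g : MvPolynomial σ K, g.IsHomogeneous (t - dg i) ∧
          h - g * f i ∈ prevIdeal f i)

/-- The power series `∏ (1 - z^{d_i}) / (1-z)^n` over `ℤ`. -/
noncomputable def semiRegSeries (n : ℕ) {M : ℕ} (dg : Fin M → ℕ) : PowerSeries ℤ :=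
  (∏ i : Fin M, (1 - (PowerSeries.X : PowerSeries ℤ) ^ dg i)) *
    ((PowerSeries.invOneSubPow ℤ n : (PowerSeries ℤ)ˣ) : PowerSeries ℤ)

/-- The cutoff of the truncation `[·]`: the first index with a nonpositive coefficient. -/
noncomputable def truncCutoff (P : PowerSeries ℤ) : ℕ :=
  sInf {t : ℕ | PowerSeries.coeff t P ≤ 0}

/-- The coefficient of `z^t` in the series `[P]` obtained by truncating `P` after
the last consecutive positive coefficient. -/
noncomputable def truncCoeff (P : PowerSeries ℤ) (t : ℕ) : ℤ :=
  if t < truncCutoff P then PowerSeries.coeff t P else 0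

section Koszul

variable {K : Type*} [Field K] {σ : Type*} {M : ℕ}

/-- Index set of the degree-`i` part of the Koszul complex on `M` polynomials. -/
abbrev KIdx (M i : ℕ) := {s : Finset (Fin M) // s.card = i}

/-- The Koszul differential `K_{i+1} → K_i` of the Koszul complex on `f`. -/
noncomputable def koszulD (f : Fin M → MvPolynomial σ K) (i : ℕ)
    (v : KIdx M (i + 1) → MvPolynomial σ K) :
    KIdx M i → MvPolynomial σ K :=
  fun t => ∑ j : Fin M,
    if h : j ∈ t.val then 0
    else ((-1 : MvPolynomial σ K) ^ (t.val.filter (fun l => l < j)).card) * f j *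
      v ⟨insert j t.val, by rw [Finset.card_insert_of_notMem h, t.prop]⟩

/-- A Koszul `i`-chain is homogeneous of (internal) degree `d`: each component at a
subset `s` is homogeneous of degree `d - ∑_{j ∈ s} dg j` (and zero if `d` is smaller
than this shift). -/
def KChainHom (dg : Fin M → ℕ) (i : ℕ)
    (v : KIdx M i → MvPolynomial σ K) (d : ℕ) : Prop :=
  ∀ t : KIdx M i,
    (v t).IsHomogeneous (d - ∑ j ∈ t.val, dg j) ∧
    (d < ∑ j ∈ t.val, dg j → v t = 0)

/-- A Koszul `i`-cycle: an `i`-chain killed by the Koszul differential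
(every `0`-chain is a cycle). -/
def IsKCycle (f : Fin M → MvPolynomial σ K) :
    (i : ℕ) → (KIdx M i → MvPolynomial σ K) → Prop
  | 0, _ => True
  | (i + 1), v => koszulD f i v = 0

/-- The degree-`d` part of the `i`-th Koszul homology of `f` vanishes:
every homogeneous cycle of degree `d` is a boundary. -/
def KoszulHVanish (f : Fin M → MvPolynomial σ K) (dg : Fin M → ℕ)
    (i d : ℕ) : Prop :=
  ∀ v : KIdx M i → MvPolynomial σ K, KChainHom dg i v d → IsKCycle f i v →
    ∃ w : KIdx M (i + 1) → MvPolynomial σ K, koszulD f i w = v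

/-- The sum `∑ v_j f_j` of which syzygies are the kernel. -/
noncomputable def syzSum (f v : Fin M → MvPolynomial σ K) : MvPolynomial σ K :=
  ∑ j : Fin M, v j * f j

/-- The module of trivial (Koszul) syzygies of `f`. -/
noncomputable def trivSyz (f : Fin M → MvPolynomial σ K) :
    Submodule (MvPolynomial σ K) (Fin M → MvPolynomial σ K) :=
  Submodule.span (MvPolynomial σ K)
    {w | ∃ i j : Fin M, i < j ∧ w = Pi.single j (f i) - Pi.single i (f j)}

/-- A tuple `v` is homogeneous of degree `e` as an element of `⊕ R(-dg j)`. -/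
def TupleHom (dg : Fin M → ℕ) (v : Fin M → MvPolynomial σ K) (e : ℕ) : Prop :=
  ∀ j : Fin M, (v j).IsHomogeneous (e - dg j) ∧ (e < dg j → v j = 0)

end Koszul

end GBPaper

namespace GBPaper

/-- The top part `h|_{y=0}` of a homogeneous polynomial in `R' = R[y]`,
viewed as an element of `R = K[x_1,…,x_n]`. -/
noncomputable def topPartR {K : Type*} [Field K] {n : ℕ}
    (g : MvPolynomial (Fin (n + 1)) K) : MvPolynomial (Fin n) K :=
  MvPolynomial.aeval (Fin.lastCases 0 fun i => MvPolynomial.X i) g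

end GBPaper

open GBPaper

/-!
Let `J_i = (f_j : j < i)`. Since `J_{i+1} = J_i + (f_i)` with `f_i` homogeneous of degree `d_i`,
`HF_{J_{i+1}}(t) = HF_{J_i}(t) - HF_{J_i}(t - d_i) + dim ((J_i : f_i) / J_i)_{t - d_i}`, while
`HF_{(0)}(t)` counts the monomials of degree `t`, the `t`-th coefficient of `1 / (1 - z)^n`.
Inducting over `i` and `t`: as long as all these kernels vanish below degree `t`, the `t`-th
coefficient of `∏ (1 - z^{d_j}) / (1 - z)^n` is `HF_{R/I}(t)` minus the kernel dimensions in
degree `t`. Since `HF_{R/I}` is positive below `D` and zero from `D` on, regularity up to `D` means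
exactly that the series agrees with `HF_{R/I}` below `D` and has a nonpositive coefficient at `D`,
i.e. that `HF_{R/I}` is its truncation.

For Koszul homology: if the sequence is regular, a homogeneous syzygy of degree `< D` whose last
nonzero entry is `V_i` has `V_i f_i ∈ J_i`, hence `V_i ∈ J_i`, and subtracting a Koszul syzygy
removes that entry. Conversely, `g f_i ∈ J_i` gives a syzygy with last entry `g`; it is a Koszul
boundary `∂W`, and a downward induction on `i` (with an inner induction on the degree, where
`d_j > 0` is needed) allows choosing `W` without rows beyond `i`, so that
`g = ∑_{k<i} W_{ki} f_k ∈ J_i`.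
-/

theorem PowerSeries.coeff_invOneSubPow {S : Type*} [CommRing S] (n t : ℕ) :
    coeff t (invOneSubPow S n : PowerSeries S) = n.multichoose t := by
  cases n with
  | zero => cases t <;> simp [invOneSubPow_zero, coeff_one]
  | succ n =>
    rw [invOneSubPow_val_succ_eq_mk_add_choose, coeff_mk, Nat.multichoose_eq,
      Nat.add_right_comm, Nat.add_sub_cancel, Nat.choose_symm_add]

theorem Submodule.finrank_map_add_finrank_inf_ker {K V W : Type*} [DivisionRing K]
    [AddCommGroup V] [Module K V] [AddCommGroup W] [Module K W] (P : Submodule K V)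
    [FiniteDimensional K P] (q : V →ₗ[K] W) :
    Module.finrank K (P.map q) + Module.finrank K (P ⊓ LinearMap.ker q : Submodule K V) =
      Module.finrank K P := by
  have := (q.domRestrict P).finrank_range_add_finrank_ker
  rwa [LinearMap.range_domRestrict, LinearMap.ker_domRestrict,
    ← Submodule.finrank_map_subtype_eq, Submodule.map_comap_subtype] at this

namespace MvPolynomial

variable {σ R : Type*}

section CommSemiring

variable [CommSemiring R]

attribute [local instance] MvPolynomial.gradedAlgebra in
theorem homogeneousComponent_mul_of_isHomogeneous {c g : MvPolynomial σ R} {e : ℕ}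
    (hg : g.IsHomogeneous e) (t : ℕ) :
    homogeneousComponent t (c * g) =
      if e ≤ t then homogeneousComponent (t - e) c * g else 0 := by
  have := DirectSum.coe_decompose_mul_of_right_mem (homogeneousSubmodule σ R) t (a := c)
    ((mem_homogeneousSubmodule e g).mpr hg)
  simpa only [DirectSum.decompose, Equiv.coe_fn_mk, decomposition.decompose'_apply] using this

/-- `p` is homogeneous of degree `e` as an element of the shifted module `R(-s)`, whose
degree-`e` part is `R_{e-s}` for `s ≤ e` and `0` for `e < s`. -/
def IsHomogeneousShifted (p : MvPolynomial σ R) (s e : ℕ) : Prop :=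
  p.IsHomogeneous (e - s) ∧ (e < s → p = 0)

noncomputable def shiftedComponent (s e : ℕ) : MvPolynomial σ R →ₗ[R] MvPolynomial σ R :=
  if s ≤ e then homogeneousComponent (e - s) else 0

theorem isHomogeneousShifted_zero (s e : ℕ) : (0 : MvPolynomial σ R).IsHomogeneousShifted s e :=
  ⟨isHomogeneous_zero _ _ _, fun _ => rfl⟩

theorem IsHomogeneous.isHomogeneousShifted {p : MvPolynomial σ R} {e : ℕ}
    (hp : p.IsHomogeneous e) (s : ℕ) : p.IsHomogeneousShifted s (e + s) :=
  ⟨by rwa [Nat.add_sub_cancel], fun h => absurd h (by omega)⟩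

theorem isHomogeneousShifted_sub_iff {p : MvPolynomial σ R} {s a e : ℕ} (h : a ≤ e) :
    p.IsHomogeneousShifted s (e - a) ↔ p.IsHomogeneousShifted (s + a) e := by
  rw [IsHomogeneousShifted, IsHomogeneousShifted, Nat.sub_sub, add_comm a s]
  exact and_congr_right' (imp_congr_left (by omega))

namespace IsHomogeneousShifted

variable {p q φ : MvPolynomial σ R} {s e a : ℕ}

theorem add (hp : p.IsHomogeneousShifted s e) (hq : q.IsHomogeneousShifted s e) :
    (p + q).IsHomogeneousShifted s e :=
  ⟨hp.1.add hq.1, fun h => by rw [hp.2 h, hq.2 h, add_zero]⟩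

theorem mul (hp : p.IsHomogeneousShifted (s + a) e) (hφ : φ.IsHomogeneous a) :
    (p * φ).IsHomogeneousShifted s e := by
  by_cases h : s + a ≤ e
  · refine ⟨?_, fun h' => absurd h' (by omega)⟩
    have := hp.1.mul hφ
    rwa [show e - (s + a) + a = e - s by omega] at this
  · rw [hp.2 (by omega), zero_mul]
    exact isHomogeneousShifted_zero s e

theorem shiftedComponent_eq (hp : p.IsHomogeneousShifted s e) : shiftedComponent s e p = p := by
  unfold shiftedComponent
  split_ifs with h
  · exact homogeneousComponent_eq_self hp.1
  · exact (hp.2 (by omega)).symm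

end IsHomogeneousShifted

theorem isHomogeneousShifted_shiftedComponent (s e : ℕ) (p : MvPolynomial σ R) :
    (shiftedComponent s e p).IsHomogeneousShifted s e := by
  unfold shiftedComponent
  split_ifs with h
  · exact ⟨homogeneousComponent_isHomogeneous _ _, fun h' => absurd h' (by omega)⟩
  · exact isHomogeneousShifted_zero s e

theorem shiftedComponent_mul {φ : MvPolynomial σ R} {a : ℕ} (hφ : φ.IsHomogeneous a)
    (s e : ℕ) (p : MvPolynomial σ R) :
    shiftedComponent s e (p * φ) = shiftedComponent (s + a) e p * φ := by
  unfold shiftedComponent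
  split_ifs with h₁ h₂ h₂
  · rw [homogeneousComponent_mul_of_isHomogeneous hφ, if_pos (by omega), Nat.sub_sub]
  · rw [homogeneousComponent_mul_of_isHomogeneous hφ, if_neg (by omega), LinearMap.zero_apply,
      zero_mul]
  · omega
  · simp

end CommSemiring

section CommRing

variable [CommRing R] {p q : MvPolynomial σ R} {s e : ℕ}

theorem IsHomogeneousShifted.neg (hp : p.IsHomogeneousShifted s e) :
    (-p).IsHomogeneousShifted s e :=
  ⟨hp.1.neg, fun h => by rw [hp.2 h, neg_zero]⟩

theorem IsHomogeneousShifted.sub (hp : p.IsHomogeneousShifted s e)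
    (hq : q.IsHomogeneousShifted s e) : (p - q).IsHomogeneousShifted s e := by
  rw [sub_eq_add_neg]
  exact hp.add hq.neg

end CommRing

section Field

variable {K : Type*} [Field K]

theorem finrank_homogeneousSubmodule (t : ℕ) :
    Module.finrank K (homogeneousSubmodule σ K t) = (Nat.card σ).multichoose t := by
  classical
  rw [homogeneousSubmodule_eq_finsupp_supported, ← restrictSupport,
    Module.finrank_eq_nat_card_basis (basisRestrictSupport K {d : σ →₀ ℕ | d.degree = t}),
    ← Sym.natCard_sym_eq_multichoose]
  exact (Nat.card_congr (Sym.equivNatSum σ t)).symm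

end Field

end MvPolynomial

namespace GBPaper

section Homogeneous

variable {K σ : Type*} [Field K] {M : ℕ}

theorem tupleHom_iff {dg : Fin M → ℕ} {v : Fin M → MvPolynomial σ K} {e : ℕ} :
    TupleHom dg v e ↔ ∀ j, (v j).IsHomogeneousShifted (dg j) e :=
  Iff.rfl

theorem exists_tupleHom_of_mem_span {f : Fin M → MvPolynomial σ K} {dg : Fin M → ℕ}
    (hhom : ∀ i, (f i).IsHomogeneous (dg i)) {s : Set (Fin M)} {p : MvPolynomial σ K} {t : ℕ}
    (hp : p.IsHomogeneous t) (hmem : p ∈ Ideal.span (f '' s)) :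
    ∃ c, TupleHom dg c t ∧ (∀ j ∉ s, c j = 0) ∧ p = syzSum f c := by
  obtain ⟨l, hl, rfl⟩ := (Finsupp.mem_span_image_iff_linearCombination _).mp hmem
  refine ⟨fun j => shiftedComponent (dg j) t (l j),
    fun j => isHomogeneousShifted_shiftedComponent _ _ _, fun j hj => ?_, ?_⟩
  · simp only [(Finsupp.mem_supported' _ _).mp hl j hj, map_zero]
  · have hp' : (Finsupp.linearCombination _ f l).IsHomogeneousShifted 0 t :=
      ⟨hp, fun h => absurd h (Nat.not_lt_zero t)⟩
    rw [← hp'.shiftedComponent_eq, Finsupp.linearCombination_apply, Finsupp.sum_fintype _ _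
      (by simp), map_sum, syzSum]
    refine Finset.sum_congr rfl fun j _ => ?_
    rw [smul_eq_mul, shiftedComponent_mul (hhom j), zero_add]

end Homogeneous

section DegReg

variable {K σ : Type*} [Field K] {I : Ideal (MvPolynomial σ K)}

theorem mem_of_isHomogeneous_succ {d : ℕ} (h : ∀ g : MvPolynomial σ K, g.IsHomogeneous d → g ∈ I)
    {g : MvPolynomial σ K} (hg : g.IsHomogeneous (d + 1)) : g ∈ I := by
  rw [as_sum g]
  refine Ideal.sum_mem _ fun m hm => ?_
  have hdeg : m.degree = d + 1 := by
    rw [Finsupp.degree_eq_weight_one]; exact hg (mem_support_iff.mp hm)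
  obtain ⟨i, hi⟩ : ∃ i, m i ≠ 0 := by
    by_contra! h0
    rw [show m = 0 from Finsupp.ext h0, map_zero] at hdeg
    omega
  have hle : Finsupp.single i 1 ≤ m := Finsupp.single_le_iff.mpr (Nat.one_le_iff_ne_zero.mpr hi)
  have hsplit : Finsupp.single i 1 + (m - Finsupp.single i 1) = m := add_tsub_cancel_of_le hle
  have hdeg' : (m - Finsupp.single i 1).degree = d := by
    have := congrArg Finsupp.degree hsplit
    rw [map_add, Finsupp.degree_single, hdeg] at this
    omega
  rw [show monomial m (coeff m g) = X i * monomial (m - Finsupp.single i 1) (coeff m g) by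
    rw [X, monomial_mul, one_mul, hsplit]]
  exact I.mul_mem_left _ (h _ (isHomogeneous_monomial _ hdeg'))

variable (hArt : ∃ d : ℕ, ∀ g : MvPolynomial σ K, g.IsHomogeneous d → g ∈ I)
include hArt

theorem mem_of_degReg_le {t : ℕ} (ht : degReg K I ≤ t) {g : MvPolynomial σ K}
    (hg : g.IsHomogeneous t) : g ∈ I := by
  induction t, ht using Nat.le_induction generalizing g with
  | base => exact Nat.sInf_mem hArt g hg
  | succ t _ ih => exact mem_of_isHomogeneous_succ (fun g hg => ih hg) hg

omit hArt in
theorem exists_notMem_of_lt_degReg {t : ℕ} (ht : t < degReg K I) :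
    ∃ g : MvPolynomial σ K, g.IsHomogeneous t ∧ g ∉ I := by
  simpa using Nat.notMem_of_lt_sInf ht

end DegReg

section Generators

variable {K σ : Type*} [Field K] {M : ℕ} {f : Fin M → MvPolynomial σ K} {dg : Fin M → ℕ}

theorem one_le_degReg (hhom : ∀ i, (f i).IsHomogeneous (dg i)) (hpos : ∀ i, 0 < dg i)
    (hArt : ∃ d : ℕ, ∀ g : MvPolynomial σ K, g.IsHomogeneous d → g ∈ Ideal.span (Set.range f)) :
    1 ≤ degReg K (Ideal.span (Set.range f)) := by
  by_contra! h
  have hle : Ideal.span (Set.range f) ≤ RingHom.ker (constantCoeff (σ := σ) (R := K)) := by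
    refine Ideal.span_le.mpr ?_
    rintro _ ⟨j, rfl⟩
    exact (hhom j).coeff_eq_zero (by simpa using (hpos j).ne)
  simpa using hle (mem_of_degReg_le hArt (Nat.lt_one_iff.mp h).le (isHomogeneous_one σ K))

end Generators

section HilbertFunction

variable {K σ : Type*} [Field K] {J J' : Ideal (MvPolynomial σ K)} {t : ℕ}

noncomputable def quotPiece (J : Ideal (MvPolynomial σ K)) (t : ℕ) :
    Submodule K (MvPolynomial σ K ⧸ J) :=
  (homogeneousSubmodule σ K t).map (Ideal.Quotient.mkₐ K J).toLinearMap

/-- The degree-`s` part of `(J : f₀) / J`. -/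
noncomputable def colonPiece (J : Ideal (MvPolynomial σ K)) (f₀ : MvPolynomial σ K) (s : ℕ) :
    Submodule K (MvPolynomial σ K ⧸ J) :=
  quotPiece J s ⊓ LinearMap.ker (LinearMap.mulLeft K (Ideal.Quotient.mk J f₀))

theorem hilbertFn_eq_finrank_quotPiece : hilbertFn K J t = Module.finrank K (quotPiece J t) :=
  rfl

theorem mem_quotPiece {x : MvPolynomial σ K ⧸ J} :
    x ∈ quotPiece J t ↔ ∃ p : MvPolynomial σ K, p.IsHomogeneous t ∧ Ideal.Quotient.mk J p = x :=
  ⟨fun ⟨p, hp, hx⟩ => ⟨p, hp, hx⟩, fun ⟨p, hp, hx⟩ => ⟨p, hp, hx⟩⟩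

instance [Finite σ] : FiniteDimensional K (quotPiece J t) :=
  Module.Finite.iff_fg.mpr ((homogeneousSubmodule_fg σ K t).map _)

theorem hilbertFn_bot (t : ℕ) :
    hilbertFn K (⊥ : Ideal (MvPolynomial σ K)) t = (Nat.card σ).multichoose t := by
  rw [hilbertFn, ← finrank_homogeneousSubmodule (K := K) t]
  exact LinearEquiv.finrank_eq (Submodule.equivMapOfInjective _
    (fun a b h => sub_eq_zero.mp (Ideal.mem_bot.mp (Ideal.Quotient.eq.mp h))) _).symm

theorem hilbertFn_eq_zero_iff [Finite σ] :
    hilbertFn K J t = 0 ↔ ∀ p : MvPolynomial σ K, p.IsHomogeneous t → p ∈ J := by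
  simp only [hilbertFn_eq_finrank_quotPiece, Submodule.finrank_eq_zero, eq_bot_iff,
    SetLike.le_def, mem_quotPiece, Submodule.mem_bot]
  refine ⟨fun h p hp => Ideal.Quotient.eq_zero_iff_mem.mp (h ⟨p, hp, rfl⟩), ?_⟩
  rintro h _ ⟨p, hp, rfl⟩
  exact Ideal.Quotient.eq_zero_iff_mem.mpr (h p hp)

instance [Finite σ] {f₀ : MvPolynomial σ K} {s : ℕ} : FiniteDimensional K (colonPiece J f₀ s) :=
  Submodule.finiteDimensional_inf_left _ _

theorem finrank_colonPiece_eq_zero_iff [Finite σ] {f₀ : MvPolynomial σ K} {s : ℕ} :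
    Module.finrank K (colonPiece J f₀ s) = 0 ↔
      ∀ g : MvPolynomial σ K, g.IsHomogeneous s → g * f₀ ∈ J → g ∈ J := by
  rw [Submodule.finrank_eq_zero]
  simp only [colonPiece, eq_bot_iff, SetLike.le_def, Submodule.mem_inf, mem_quotPiece,
    LinearMap.mem_ker, LinearMap.mulLeft_apply, Submodule.mem_bot]
  refine ⟨fun h g hg hgf => Ideal.Quotient.eq_zero_iff_mem.mp (h ⟨⟨g, hg, rfl⟩, ?_⟩), ?_⟩
  · rw [← map_mul, mul_comm, Ideal.Quotient.eq_zero_iff_mem]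
    exact hgf
  · rintro h _ ⟨⟨g, hg, rfl⟩, hgf⟩
    rw [← map_mul, mul_comm, Ideal.Quotient.eq_zero_iff_mem] at hgf
    exact Ideal.Quotient.eq_zero_iff_mem.mpr (h g hg hgf)

theorem hilbertFn_eq_of_decomposition [Finite σ] {f₀ : MvPolynomial σ K} {e : ℕ}
    (hf₀ : f₀.IsHomogeneous e) (hle : J ≤ J') (hmem : f₀ ∈ J')
    (hdec : ∀ p : MvPolynomial σ K, p.IsHomogeneous t → p ∈ J' →
      ∃ c : MvPolynomial σ K, c.IsHomogeneousShifted e t ∧ p - c * f₀ ∈ J) :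
    (hilbertFn K J' t : ℤ) = hilbertFn K J t -
      if e ≤ t then (hilbertFn K J (t - e) : ℤ) - Module.finrank K (colonPiece J f₀ (t - e))
      else 0 := by
  rw [colonPiece]
  set q := (Ideal.Quotient.factorₐ K hle).toLinearMap
  set φ := LinearMap.mulLeft K (Ideal.Quotient.mk J f₀)
  have hmap : (quotPiece J t).map q = quotPiece J' t := by
    rw [quotPiece, ← Submodule.map_comp, ← AlgHom.comp_toLinearMap,
      Ideal.Quotient.factorₐ_comp_mk, quotPiece]
  have hker : quotPiece J t ⊓ LinearMap.ker q =
      if e ≤ t then (quotPiece J (t - e)).map φ else ⊥ := by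
    ext x
    simp only [Submodule.mem_inf, mem_quotPiece, LinearMap.mem_ker]
    constructor
    · rintro ⟨⟨p, hp, rfl⟩, hpq⟩
      obtain ⟨c, hc, hpc⟩ := hdec p hp (Ideal.Quotient.eq_zero_iff_mem.mp hpq)
      have hpc' : Ideal.Quotient.mk J p = φ (Ideal.Quotient.mk J c) := by
        rw [LinearMap.mulLeft_apply, ← map_mul, mul_comm, Ideal.Quotient.mk_eq_mk_iff_sub_mem]
        exact hpc
      split_ifs with het
      · exact ⟨_, mem_quotPiece.mpr ⟨c, hc.1, rfl⟩, hpc'.symm⟩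
      · rw [hpc', hc.2 (by omega), map_zero, map_zero]
        exact Submodule.zero_mem _
    · split_ifs with het
      · rintro ⟨_, ⟨c, hc, rfl⟩, rfl⟩
        refine ⟨⟨f₀ * c, ?_, by simp [φ]⟩, ?_⟩
        · simpa [Nat.add_sub_cancel' het] using hf₀.mul hc
        · simp only [φ, q, LinearMap.mulLeft_apply, AlgHom.toLinearMap_apply,
            Ideal.Quotient.factorₐ_apply]
          exact Ideal.Quotient.eq_zero_iff_mem.mpr (J'.mul_mem_right _ hmem)
      · rintro rfl
        exact ⟨⟨0, isHomogeneous_zero _ _ _, rfl⟩, map_zero q⟩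
  have h₁ := Submodule.finrank_map_add_finrank_inf_ker (quotPiece J t) q
  have h₂ := Submodule.finrank_map_add_finrank_inf_ker (quotPiece J (t - e)) φ
  rw [hmap, hker] at h₁
  simp only [hilbertFn_eq_finrank_quotPiece]
  by_cases het : e ≤ t
  · rw [if_pos het] at h₁ ⊢
    omega
  · rw [if_neg het, finrank_bot] at h₁
    rw [if_neg het]
    omega

end HilbertFunction

section Prefix

variable {K σ : Type*} [Field K] {M : ℕ} (f : Fin M → MvPolynomial σ K) (dg : Fin M → ℕ)

noncomputable def prefixIdeal (i : ℕ) : Ideal (MvPolynomial σ K) :=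
  Ideal.span (f '' {j | (j : ℕ) < i})

theorem prefixIdeal_zero : prefixIdeal f 0 = ⊥ := by
  simp [prefixIdeal]

theorem prefixIdeal_self : prefixIdeal f M = Ideal.span (Set.range f) := by
  simp [prefixIdeal]

theorem prefixIdeal_le_succ (i : ℕ) : prefixIdeal f i ≤ prefixIdeal f (i + 1) :=
  Ideal.span_mono (Set.image_mono fun j (hj : (j : ℕ) < i) => Nat.lt_succ_of_lt hj)

theorem mem_prefixIdeal_succ (i : Fin M) : f i ∈ prefixIdeal f (i + 1) :=
  Ideal.subset_span ⟨i, Nat.lt_succ_self i, rfl⟩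

variable {f dg}

theorem exists_sub_mul_mem_prefixIdeal (hhom : ∀ i, (f i).IsHomogeneous (dg i)) (i : Fin M)
    {p : MvPolynomial σ K} {t : ℕ} (hp : p.IsHomogeneous t) (hmem : p ∈ prefixIdeal f (i + 1)) :
    ∃ c : MvPolynomial σ K, c.IsHomogeneousShifted (dg i) t ∧ p - c * f i ∈ prefixIdeal f i := by
  obtain ⟨c, hc, hcs, rfl⟩ := exists_tupleHom_of_mem_span hhom hp hmem
  refine ⟨c i, hc i, ?_⟩
  rw [syzSum, ← Finset.add_sum_erase _ _ (Finset.mem_univ i), add_sub_cancel_left]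
  refine Ideal.sum_mem _ fun j hj => ?_
  by_cases hji : (j : ℕ) < i
  · exact Ideal.mul_mem_left _ _ (Ideal.subset_span ⟨j, hji, rfl⟩)
  · have : (j : ℕ) ≠ i := fun h => (Finset.ne_of_mem_erase hj) (Fin.ext h)
    rw [hcs j (show ¬ ((j : ℕ) < i + 1) by omega), zero_mul]
    exact Ideal.zero_mem _

variable (f dg)

/-- The dimension of the degree-`t` part of the kernel of multiplication by `f i` on
`(R / prefixIdeal f i)(-dg i)`. -/
noncomputable def kerDim (i : Fin M) (t : ℕ) : ℕ :=
  if dg i ≤ t then Module.finrank K (colonPiece (prefixIdeal f i) (f i) (t - dg i)) else 0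

theorem hilbertFn_prefixIdeal_succ [Finite σ] (hhom : ∀ i, (f i).IsHomogeneous (dg i))
    (i : Fin M) (t : ℕ) :
    (hilbertFn K (prefixIdeal f (i + 1)) t : ℤ) = hilbertFn K (prefixIdeal f i) t -
      (if dg i ≤ t then (hilbertFn K (prefixIdeal f i) (t - dg i) : ℤ) else 0) +
      kerDim f dg i t := by
  rw [hilbertFn_eq_of_decomposition (hhom i) (prefixIdeal_le_succ f i) (mem_prefixIdeal_succ f i)
    (fun p hp hmem => exists_sub_mul_mem_prefixIdeal hhom i hp hmem), kerDim]
  split_ifs <;> push_cast <;> ring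

variable {f dg}

theorem isDRegularSeq_iff_kerDim_eq_zero [Finite σ] {D : ℕ} :
    IsDRegularSeq f dg D ↔ ∀ i t, t < D → kerDim f dg i t = 0 := by
  refine ⟨fun h i t ht => ?_, fun h i g e hg he => ?_⟩
  · rw [kerDim]
    split_ifs
    · exact finrank_colonPiece_eq_zero_iff.mpr fun g hg => h i g _ hg (by omega)
    · rfl
  · have := h i (e + dg i) he
    rw [kerDim, if_pos (Nat.le_add_left _ _), finrank_colonPiece_eq_zero_iff] at this
    exact this g (by rwa [Nat.add_sub_cancel])

end Prefix

section PrefixSeries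

open PowerSeries

variable {M : ℕ}

theorem filter_val_lt_succ (i : Fin M) :
    Finset.univ.filter (fun j : Fin M => (j : ℕ) < i + 1) =
      insert i (Finset.univ.filter fun j : Fin M => (j : ℕ) < i) := by
  ext j
  simp only [Finset.mem_filter, Finset.mem_univ, true_and, Finset.mem_insert, Fin.ext_iff]
  omega

noncomputable def prefixSeries (n : ℕ) (dg : Fin M → ℕ) (i : ℕ) : PowerSeries ℤ :=
  (∏ j ∈ Finset.univ.filter (fun j : Fin M => (j : ℕ) < i), (1 - PowerSeries.X ^ dg j)) *
    (invOneSubPow ℤ n : PowerSeries ℤ)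

variable (n : ℕ) (dg : Fin M → ℕ)

theorem prefixSeries_self : prefixSeries n dg M = semiRegSeries n dg := by
  simp [prefixSeries, semiRegSeries]

theorem coeff_prefixSeries_zero (t : ℕ) : coeff t (prefixSeries n dg 0) = n.multichoose t := by
  simp [prefixSeries, coeff_invOneSubPow]

theorem coeff_prefixSeries_succ (i : Fin M) (t : ℕ) :
    coeff t (prefixSeries n dg (i + 1)) = coeff t (prefixSeries n dg i) -
      if dg i ≤ t then coeff (t - dg i) (prefixSeries n dg i) else 0 := by
  rw [prefixSeries, filter_val_lt_succ, Finset.prod_insert (by simp), mul_comm (1 - _),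
    mul_assoc, mul_comm (1 - _), ← mul_assoc, ← prefixSeries, mul_one_sub, map_sub,
    coeff_mul_X_pow']

end PrefixSeries

section Truncation

open PowerSeries

theorem forall_eq_truncCoeff_iff {P : PowerSeries ℤ} {h : ℕ → ℤ} {D : ℕ} (hD : 1 ≤ D)
    (hpos : ∀ t < D, 0 < h t) (hzero : ∀ t, D ≤ t → h t = 0) :
    (∀ t, h t = truncCoeff P t) ↔ (∀ t < D, coeff t P = h t) ∧ coeff D P ≤ 0 := by
  constructor
  · intro hP
    have hlt : ∀ t < D, t < truncCutoff P := fun t ht => by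
      by_contra hc
      have := hP t
      rw [truncCoeff, if_neg hc] at this
      exact (hpos t ht).ne' this
    have hcoeff : ∀ t < truncCutoff P, coeff t P = h t := fun t ht => by
      rw [hP t, truncCoeff, if_pos ht]
    refine ⟨fun t ht => hcoeff t (hlt t ht), ?_⟩
    have hcut : truncCutoff P ∈ {t : ℕ | coeff t P ≤ 0} := Nat.sInf_mem <|
      Nat.nonempty_of_pos_sInf (lt_of_le_of_lt (Nat.zero_le _) (hlt (D - 1) (by omega)))
    rcases (Nat.le_of_pred_lt (hlt (D - 1) (by omega))).eq_or_lt with heq | hgt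
    · rwa [← heq] at hcut
    · have hD0 : coeff D P ≤ 0 := (hcoeff D hgt).trans (hzero D le_rfl) |>.le
      exact absurd hD0 (Nat.notMem_of_lt_sInf hgt)
  · rintro ⟨hc, hcD⟩
    have hcut : truncCutoff P = D := le_antisymm (Nat.sInf_le hcD) <|
      le_csInf ⟨D, hcD⟩ fun b hb => by
        by_contra! hbD
        exact absurd hb (not_le.mpr ((hc b hbD).symm ▸ hpos b hbD))
    intro t
    rw [truncCoeff, hcut]
    split_ifs with ht
    · exact (hc t ht).symm
    · exact hzero t (by omega)

end Truncation

section HilbertSeries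

open PowerSeries

variable {K σ : Type*} [Field K] {M : ℕ} {f : Fin M → MvPolynomial σ K} {dg : Fin M → ℕ}

variable [Finite σ]

theorem coeff_prefixSeries (hhom : ∀ i, (f i).IsHomogeneous (dg i)) (hpos : ∀ i, 0 < dg i)
    {t : ℕ} (hvan : ∀ j s, s < t → kerDim f dg j s = 0) {i : ℕ} (hi : i ≤ M) :
    coeff t (prefixSeries (Nat.card σ) dg i) = hilbertFn K (prefixIdeal f i) t -
      ∑ j ∈ Finset.univ.filter (fun j : Fin M => (j : ℕ) < i), (kerDim f dg j t : ℤ) := by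
  induction t using Nat.strong_induction_on generalizing i with
  | _ t IH =>
  induction i with
  | zero => simp [coeff_prefixSeries_zero, prefixIdeal_zero, hilbertFn_bot]
  | succ i ih =>
    set ι : Fin M := ⟨i, hi⟩
    have hlower : dg ι ≤ t → coeff (t - dg ι) (prefixSeries (Nat.card σ) dg i) =
        hilbertFn K (prefixIdeal f i) (t - dg ι) := fun hle => by
      have hlt : t - dg ι < t := Nat.sub_lt_of_pos_le (hpos ι) hle
      rw [IH _ hlt (fun j s hs => hvan j s (hs.trans hlt)) (by omega),
        Finset.sum_eq_zero fun j _ => by rw [hvan j _ hlt, Nat.cast_zero], sub_zero]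
    rw [show i + 1 = (ι : ℕ) + 1 from rfl, coeff_prefixSeries_succ, filter_val_lt_succ,
      Finset.sum_insert (by simp), hilbertFn_prefixIdeal_succ f dg hhom, ih (by omega)]
    split_ifs with hle
    · rw [hlower hle]
      ring
    · ring

theorem hilbertFn_pos_of_lt_degReg {I : Ideal (MvPolynomial σ K)} {t : ℕ} (ht : t < degReg K I) :
    0 < hilbertFn K I t := by
  obtain ⟨g, hg, hgI⟩ := exists_notMem_of_lt_degReg ht
  exact Nat.pos_of_ne_zero fun h => hgI (hilbertFn_eq_zero_iff.mp h g hg)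

theorem isDRegularSeq_iff_coeff_semiRegSeries (hhom : ∀ i, (f i).IsHomogeneous (dg i))
    (hpos : ∀ i, 0 < dg i) {D : ℕ} (hD : hilbertFn K (Ideal.span (Set.range f)) D = 0) :
    IsDRegularSeq f dg D ↔
      (∀ t < D, coeff t (semiRegSeries (Nat.card σ) dg) =
        hilbertFn K (Ideal.span (Set.range f)) t) ∧
      coeff D (semiRegSeries (Nat.card σ) dg) ≤ 0 := by
  have hcoeff : ∀ t, (∀ j s, s < t → kerDim f dg j s = 0) →
      coeff t (semiRegSeries (Nat.card σ) dg) =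
        hilbertFn K (Ideal.span (Set.range f)) t - ∑ j, (kerDim f dg j t : ℤ) := fun t hvan => by
    rw [← prefixSeries_self, coeff_prefixSeries hhom hpos hvan le_rfl, prefixIdeal_self]
    simp
  rw [isDRegularSeq_iff_kerDim_eq_zero]
  constructor
  · intro h
    refine ⟨fun t ht => ?_, ?_⟩
    · rw [hcoeff t fun j s hs => h j s (hs.trans ht)]
      simp [h _ t ht]
    · rw [hcoeff D fun j s hs => h j s hs, hD, Nat.cast_zero, zero_sub, neg_nonpos]
      exact Finset.sum_nonneg fun _ _ => Nat.cast_nonneg _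
  · rintro ⟨hc, -⟩ j t ht
    induction t using Nat.strong_induction_on generalizing j with
    | _ t IH =>
    have hsum := hcoeff t fun j s hs => IH s hs j (hs.trans ht)
    rw [hc t ht, eq_sub_iff_add_eq, add_eq_left,
      Finset.sum_eq_zero_iff_of_nonneg fun _ _ => Nat.cast_nonneg _] at hsum
    exact_mod_cast hsum j (Finset.mem_univ j)

end HilbertSeries

section Syzygy

variable {K σ : Type*} [Field K] {M : ℕ} {f : Fin M → MvPolynomial σ K} {dg : Fin M → ℕ}

theorem syzSum_sub (f V V' : Fin M → MvPolynomial σ K) :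
    syzSum f (V - V') = syzSum f V - syzSum f V' := by
  simp [syzSum, sub_mul]

theorem syzSum_single (f : Fin M → MvPolynomial σ K) (i : Fin M) (g : MvPolynomial σ K) :
    syzSum f (Pi.single i g) = g * f i := by
  simp [syzSum, Pi.single_apply]

theorem TupleHom.sub {V V' : Fin M → MvPolynomial σ K} {d : ℕ} (hV : TupleHom dg V d)
    (hV' : TupleHom dg V' d) : TupleHom dg (V - V') d :=
  fun j => IsHomogeneousShifted.sub (hV j) (hV' j)

theorem tupleHom_single {i : Fin M} {g : MvPolynomial σ K} {e : ℕ} (hg : g.IsHomogeneous e) :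
    TupleHom dg (Pi.single i g) (e + dg i) := tupleHom_iff.mpr fun j => by
  rcases eq_or_ne j i with rfl | hj
  · rw [Pi.single_eq_same]
    exact hg.isHomogeneousShifted (dg j)
  · rw [Pi.single_eq_of_ne hj]
    exact isHomogeneousShifted_zero _ _

theorem mul_mem_prevIdeal_of_syzSum_eq_zero {V : Fin M → MvPolynomial σ K}
    (hsyz : syzSum f V = 0) {i : Fin M} (hsupp : ∀ j, i < j → V j = 0) :
    V i * f i ∈ prevIdeal f i := by
  rw [syzSum, ← Finset.add_sum_erase _ _ (Finset.mem_univ i), add_eq_zero_iff_eq_neg] at hsyz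
  rw [hsyz]
  refine neg_mem (Ideal.sum_mem _ fun j hj => ?_)
  rcases lt_or_gt_of_ne (Finset.ne_of_mem_erase hj) with hji | hij
  · exact Ideal.mul_mem_left _ _ (Ideal.subset_span ⟨j, hji, rfl⟩)
  · rw [hsupp j hij, zero_mul]
    exact Ideal.zero_mem _

/-- Alternating matrices encode the `2`-chains `∑_{j<k} W j k · e_j ∧ e_k` of the Koszul
complex. -/
def IsAlternating (W : Fin M → Fin M → MvPolynomial σ K) : Prop :=
  (∀ j, W j j = 0) ∧ ∀ j k, W j k = -W k j

theorem isAlternating_zero : IsAlternating (0 : Fin M → Fin M → MvPolynomial σ K) :=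
  ⟨fun _ => rfl, fun _ _ => by simp⟩

theorem IsAlternating.add {W W' : Fin M → Fin M → MvPolynomial σ K} (hW : IsAlternating W)
    (hW' : IsAlternating W') : IsAlternating (W + W') :=
  ⟨fun j => by simp [hW.1 j, hW'.1 j], fun j k => by simp [hW.2 j k, hW'.2 j k]; ring⟩

theorem IsAlternating.sub {W W' : Fin M → Fin M → MvPolynomial σ K} (hW : IsAlternating W)
    (hW' : IsAlternating W') : IsAlternating (W - W') :=
  ⟨fun j => by simp [hW.1 j, hW'.1 j], fun j k => by simp [hW.2 j k, hW'.2 j k]; ring⟩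

theorem IsAlternating.mul_left {W : Fin M → Fin M → MvPolynomial σ K} (hW : IsAlternating W)
    (φ : MvPolynomial σ K) : IsAlternating fun j k => φ * W j k :=
  ⟨fun j => by simp [hW.1 j], fun j k => by simp only [hW.2 j k, mul_neg]⟩

noncomputable def koszulBd (f : Fin M → MvPolynomial σ K) :
    (Fin M → Fin M → MvPolynomial σ K) →ₗ[MvPolynomial σ K] (Fin M → MvPolynomial σ K) where
  toFun W j := ∑ k, W k j * f k
  map_add' W W' := funext fun j => by simp [add_mul, Finset.sum_add_distrib]
  map_smul' φ W := funext fun j => by simp [Finset.mul_sum, mul_assoc]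

theorem koszulBd_apply (W : Fin M → Fin M → MvPolynomial σ K) (j : Fin M) :
    koszulBd f W j = ∑ k, W k j * f k :=
  rfl

/-- The alternating matrix of `∑_a c a · e_a ∧ e_i`. -/
noncomputable def wedgeMatrix (i : Fin M) (c : Fin M → MvPolynomial σ K) :
    Fin M → Fin M → MvPolynomial σ K :=
  fun a b => (if b = i then c a else 0) - (if a = i then c b else 0)

theorem isAlternating_wedgeMatrix (i : Fin M) (c : Fin M → MvPolynomial σ K) :
    IsAlternating (wedgeMatrix i c) :=
  ⟨fun _ => sub_self _, fun _ _ => (neg_sub _ _).symm⟩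

theorem koszulBd_wedgeMatrix (i : Fin M) (c : Fin M → MvPolynomial σ K) :
    koszulBd f (wedgeMatrix i c) = Pi.single i (syzSum f c) - fun j => c j * f i := by
  funext j
  simp [koszulBd_apply, wedgeMatrix, sub_mul, Finset.sum_sub_distrib, syzSum, Pi.single_apply,
    ite_mul]

theorem syzSum_koszulBd_wedgeMatrix (i : Fin M) (c : Fin M → MvPolynomial σ K) :
    syzSum f (koszulBd f (wedgeMatrix i c)) = 0 := by
  rw [koszulBd_wedgeMatrix, syzSum_sub, syzSum_single, syzSum, syzSum, Finset.sum_mul]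
  simp only [mul_right_comm _ (f i), sub_self]

def IsHomogeneousMatrix (dg : Fin M → ℕ) (W : Fin M → Fin M → MvPolynomial σ K) (d : ℕ) : Prop :=
  ∀ j k, (W j k).IsHomogeneousShifted (dg j + dg k) d

theorem tupleHom_koszulBd (hhom : ∀ i, (f i).IsHomogeneous (dg i))
    {W : Fin M → Fin M → MvPolynomial σ K} {d : ℕ} (hW : IsHomogeneousMatrix dg W d) :
    TupleHom dg (koszulBd f W) d := fun j => by
  rw [koszulBd_apply]
  refine Finset.sum_induction _ (fun p : MvPolynomial σ K => p.IsHomogeneousShifted (dg j) d)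
    (fun _ _ => IsHomogeneousShifted.add) (isHomogeneousShifted_zero _ _)
    fun k _ => IsHomogeneousShifted.mul ?_ (hhom k)
  rw [add_comm]
  exact hW k j

theorem isHomogeneousMatrix_wedgeMatrix {i : Fin M} {c : Fin M → MvPolynomial σ K} {d : ℕ}
    (hid : dg i ≤ d) (hc : TupleHom dg c (d - dg i)) :
    IsHomogeneousMatrix dg (wedgeMatrix i c) d := fun a b => by
  unfold wedgeMatrix
  refine IsHomogeneousShifted.sub ?_ ?_ <;> split_ifs with h
  · subst h; exact (isHomogeneousShifted_sub_iff hid).mp (hc a)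
  · exact isHomogeneousShifted_zero _ _
  · subst h; rw [add_comm]; exact (isHomogeneousShifted_sub_iff hid).mp (hc b)
  · exact isHomogeneousShifted_zero _ _

theorem IsHomogeneousMatrix.sub {W W' : Fin M → Fin M → MvPolynomial σ K} {d : ℕ}
    (hW : IsHomogeneousMatrix dg W d) (hW' : IsHomogeneousMatrix dg W' d) :
    IsHomogeneousMatrix dg (W - W') d :=
  fun j k => (hW j k).sub (hW' j k)

theorem IsHomogeneousMatrix.mul_left {Z : Fin M → Fin M → MvPolynomial σ K} {d e : ℕ}
    (hZ : IsHomogeneousMatrix dg Z (d - e)) (hed : e ≤ d) {φ : MvPolynomial σ K}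
    (hφ : φ.IsHomogeneous e) : IsHomogeneousMatrix dg (fun j k => φ * Z j k) d := fun j k => by
  simp only [mul_comm φ]
  exact ((isHomogeneousShifted_sub_iff hed).mp (hZ j k)).mul hφ

theorem IsHomogeneousMatrix.tupleHom_col {W : Fin M → Fin M → MvPolynomial σ K} {d : ℕ}
    (hW : IsHomogeneousMatrix dg W d) {i : Fin M} (hid : dg i ≤ d) :
    TupleHom dg (fun k => W k i) (d - dg i) :=
  fun k => (isHomogeneousShifted_sub_iff hid).mpr (hW k i)

end Syzygy

section KoszulChains

variable {K σ : Type*} [Field K] {M : ℕ} {f : Fin M → MvPolynomial σ K} {dg : Fin M → ℕ}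

def singletonIdx (j : Fin M) : KIdx M 1 :=
  ⟨{j}, Finset.card_singleton j⟩

theorem exists_eq_singletonIdx (t : KIdx M 1) : ∃ j, t = singletonIdx j := by
  obtain ⟨j, hj⟩ := Finset.card_eq_one.mp t.prop
  exact ⟨j, Subtype.ext hj⟩

def pairIdx {j k : Fin M} (h : j < k) : KIdx M 2 :=
  ⟨{j, k}, Finset.card_pair h.ne⟩

theorem koszulD_zero_apply (v : KIdx M 1 → MvPolynomial σ K) (t : KIdx M 0) :
    koszulD f 0 v t = syzSum f fun j => v (singletonIdx j) := by
  obtain ⟨t, ht⟩ := t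
  obtain rfl := Finset.card_eq_zero.mp ht
  simp [koszulD, syzSum, singletonIdx, mul_comm]

theorem isKCycle_one_iff {v : KIdx M 1 → MvPolynomial σ K} :
    IsKCycle f 1 v ↔ syzSum f (fun j => v (singletonIdx j)) = 0 := by
  refine ⟨fun h => ?_, fun h => funext fun t => by rw [koszulD_zero_apply, h]; rfl⟩
  rw [← koszulD_zero_apply v ⟨∅, rfl⟩]
  exact congrFun h _

theorem kChainHom_one_iff {v : KIdx M 1 → MvPolynomial σ K} {d : ℕ} :
    KChainHom dg 1 v d ↔ TupleHom dg (fun j => v (singletonIdx j)) d := by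
  refine ⟨fun h j => by simpa [singletonIdx] using h (singletonIdx j), fun h t => ?_⟩
  obtain ⟨j, rfl⟩ := exists_eq_singletonIdx t
  simpa [singletonIdx] using h j

def toKChain (W : Fin M → Fin M → MvPolynomial σ K) (t : KIdx M 2) : MvPolynomial σ K :=
  W (t.val.min' (Finset.card_pos.mp (by omega))) (t.val.max' (Finset.card_pos.mp (by omega)))

noncomputable def ofKChain (w : KIdx M 2 → MvPolynomial σ K) (j k : Fin M) : MvPolynomial σ K :=
  if h : j < k then w (pairIdx h) else if h : k < j then -w (pairIdx h) else 0

theorem toKChain_pairIdx (W : Fin M → Fin M → MvPolynomial σ K) {j k : Fin M} (h : j < k) :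
    toKChain W (pairIdx h) = W j k := by
  simp [toKChain, pairIdx, Finset.min'_insert, Finset.max'_insert, h.le]

theorem toKChain_ofKChain (w : KIdx M 2 → MvPolynomial σ K) : toKChain (ofKChain w) = w := by
  funext t
  obtain ⟨j, k, hjk, ht⟩ := Finset.card_eq_two.mp t.prop
  rcases hjk.lt_or_gt with h | h
  · have : t = pairIdx h := Subtype.ext ht
    subst this
    rw [toKChain_pairIdx, ofKChain, dif_pos h]
  · have : t = pairIdx h := Subtype.ext (ht.trans (Finset.pair_comm j k))
    subst this
    rw [toKChain_pairIdx, ofKChain, dif_pos h]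

theorem isAlternating_ofKChain (w : KIdx M 2 → MvPolynomial σ K) :
    IsAlternating (ofKChain w) := by
  refine ⟨fun j => by simp [ofKChain], fun j k => ?_⟩
  rcases lt_trichotomy j k with h | rfl | h
  · simp [ofKChain, h, h.not_gt]
  · simp [ofKChain]
  · simp [ofKChain, h, h.not_gt]

theorem koszulD_one_toKChain_apply {W : Fin M → Fin M → MvPolynomial σ K}
    (hW : IsAlternating W) (j : Fin M) :
    koszulD f 1 (toKChain W) (singletonIdx j) = koszulBd f W j := by
  simp only [koszulD, koszulBd_apply]
  refine Finset.sum_congr rfl fun k _ => ?_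
  rcases lt_trichotomy k j with h | rfl | h
  · rw [dif_neg (by simp [singletonIdx, h.ne])]
    have : (⟨insert k (singletonIdx j).val, Finset.card_pair h.ne⟩ : KIdx M 2) = pairIdx h := rfl
    rw [this, toKChain_pairIdx]
    simp [singletonIdx, Finset.filter_singleton, h.not_gt, mul_comm]
  · simp [singletonIdx, hW.1]
  · rw [dif_neg (by simp [singletonIdx, h.ne'])]
    have : (⟨insert k (singletonIdx j).val, Finset.card_pair h.ne'⟩ : KIdx M 2) = pairIdx h :=
      Subtype.ext (Finset.pair_comm k j)
    rw [this, toKChain_pairIdx]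
    simp [singletonIdx, Finset.filter_singleton, h, hW.2 j k, mul_comm]

theorem koszulHVanish_one_iff {d : ℕ} :
    KoszulHVanish f dg 1 d ↔ ∀ V : Fin M → MvPolynomial σ K, TupleHom dg V d →
      syzSum f V = 0 → ∃ W, IsAlternating W ∧ V = koszulBd f W := by
  constructor
  · intro h V hV hsyz
    obtain ⟨w, hw⟩ := h (fun t => ∑ j ∈ t.val, V j)
      (kChainHom_one_iff.mpr (by simpa [singletonIdx] using hV))
      (isKCycle_one_iff.mpr (by simpa [singletonIdx] using hsyz))
    refine ⟨ofKChain w, isAlternating_ofKChain w, funext fun j => ?_⟩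
    rw [← koszulD_one_toKChain_apply (isAlternating_ofKChain w), toKChain_ofKChain, hw]
    simp [singletonIdx]
  · intro h v hv hcyc
    obtain ⟨W, hW, hVW⟩ := h _ (kChainHom_one_iff.mp hv) (isKCycle_one_iff.mp hcyc)
    refine ⟨toKChain W, funext fun t => ?_⟩
    obtain ⟨j, rfl⟩ := exists_eq_singletonIdx t
    rw [koszulD_one_toKChain_apply hW, ← hVW]

end KoszulChains

section KoszulHomology

variable {K σ : Type*} [Field K] {M : ℕ} {f : Fin M → MvPolynomial σ K} {dg : Fin M → ℕ}

/-- Peeling off the last nonzero entry `V i`: regularity puts `V i` into `prevIdeal f i`,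
and subtracting the corresponding Koszul syzygy kills that entry. -/
theorem exists_koszulBd_of_isDRegularSeq (hhom : ∀ i, (f i).IsHomogeneous (dg i)) {D : ℕ}
    (hreg : IsDRegularSeq f dg D) {d : ℕ} (hd : d < D) {i : ℕ} {V : Fin M → MvPolynomial σ K}
    (hV : TupleHom dg V d) (hsyz : syzSum f V = 0) (hsupp : ∀ j : Fin M, i ≤ j → V j = 0) :
    ∃ W, IsAlternating W ∧ V = koszulBd f W := by
  induction i generalizing V with
  | zero =>
    exact ⟨0, isAlternating_zero, funext fun j => by simp [hsupp j (Nat.zero_le _)]⟩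
  | succ i ih =>
    by_cases hiM : i < M
    swap
    · exact ih hV hsyz fun j hj => absurd j.isLt (by omega)
    set ι : Fin M := ⟨i, hiM⟩
    have hsupp' : ∀ j : Fin M, ι < j → V j = 0 := fun j hj => hsupp j (Nat.succ_le_of_lt hj)
    by_cases hdι : d < dg ι
    · refine ih hV hsyz fun j hj => ?_
      rcases hj.eq_or_lt with hj | hj
      · rw [show j = ι from Fin.ext hj.symm]
        exact (hV ι).2 hdι
      · exact hsupp' j hj
    have hmem : V ι ∈ prevIdeal f ι := hreg ι (V ι) (d - dg ι) (hV ι).1 (by omega)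
      (mul_mem_prevIdeal_of_syzSum_eq_zero hsyz hsupp')
    obtain ⟨c, hc, hcs, hVc⟩ := exists_tupleHom_of_mem_span hhom (hV ι).1 hmem
    have hc0 : ∀ j : Fin M, i ≤ j → c j = 0 := fun j hj => hcs j (not_lt.mpr hj)
    obtain ⟨W, hW, hVW⟩ := ih (V := V - koszulBd f (wedgeMatrix ι c))
      (hV.sub (tupleHom_koszulBd hhom (isHomogeneousMatrix_wedgeMatrix (by omega) hc)))
      (by rw [syzSum_sub, hsyz, syzSum_koszulBd_wedgeMatrix, sub_zero])
      (fun j hj => by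
        have hcj : c j = 0 := hc0 j hj
        rcases hj.eq_or_lt with hj | hj
        · obtain rfl : ι = j := Fin.ext hj
          simp [koszulBd_wedgeMatrix, ← hVc, hcj]
        · have hjι : j ≠ ι := fun h => by rw [h] at hj; exact lt_irrefl _ hj
          simp [koszulBd_wedgeMatrix, hsupp' j hj, hcj, hjι])
    refine ⟨W + wedgeMatrix ι c, hW.add (isAlternating_wedgeMatrix ι c), ?_⟩
    rw [map_add, ← hVW, sub_add_cancel]

theorem exists_isHomogeneousMatrix_of_eq_koszulBd (hhom : ∀ i, (f i).IsHomogeneous (dg i))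
    {V : Fin M → MvPolynomial σ K} {d : ℕ} (hV : TupleHom dg V d)
    {W₀ : Fin M → Fin M → MvPolynomial σ K} (hW₀ : IsAlternating W₀) (hVW : V = koszulBd f W₀) :
    ∃ W, IsAlternating W ∧ IsHomogeneousMatrix dg W d ∧ V = koszulBd f W := by
  refine ⟨fun j k => shiftedComponent (dg j + dg k) d (W₀ j k), ⟨fun j => ?_, fun j k => ?_⟩,
    fun j k => isHomogeneousShifted_shiftedComponent _ _ _, funext fun j => ?_⟩
  · simp [hW₀.1 j]
  · simp [hW₀.2 j k, add_comm]
  · rw [← IsHomogeneousShifted.shiftedComponent_eq (hV j), hVW, koszulBd_apply, koszulBd_apply,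
      map_sum]
    simp only [shiftedComponent_mul (hhom _), add_comm]

theorem koszulBd_sub_wedgeMatrix_sub_mul {W Z : Fin M → Fin M → MvPolynomial σ K} {i : Fin M}
    (hcol : syzSum f (fun k => W k i) = 0) (hZ : (fun k => W k i) = koszulBd f Z) :
    koszulBd f (W - wedgeMatrix i (fun k => W k i) - fun a b => f i * Z a b) = koszulBd f W := by
  rw [show (fun a b => f i * Z a b) = f i • Z from rfl, map_sub, map_sub, map_smul,
    koszulBd_wedgeMatrix, hcol, Pi.single_zero, ← hZ]
  funext j
  simp only [Pi.sub_apply, Pi.smul_apply, Pi.zero_apply, smul_eq_mul]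
  ring

theorem sub_wedgeMatrix_sub_mul_apply_eq_zero {W Z : Fin M → Fin M → MvPolynomial σ K}
    (hW : IsAlternating W) {i : Fin M} (hWs : ∀ a b, i < a → W a b = 0)
    (hZs : ∀ a b, i ≤ a → Z a b = 0) {a : Fin M} (ha : i ≤ a) (b : Fin M) :
    (W - wedgeMatrix i (fun k => W k i) - fun a b => f i * Z a b) a b = 0 := by
  rcases ha.eq_or_lt with rfl | ha
  · simp [wedgeMatrix, hZs i b le_rfl, hW.1 i, hW.2 b i]
  · simp [wedgeMatrix, hZs a b ha.le, hWs a b ha, hWs a i ha, ha.ne']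

/-- Downward induction on `i`, and inside it on `d`: given `W` with no rows `> i`, the column
`k ↦ W k i` is a syzygy of lower degree, hence `∂ Z` with no rows `≥ i`, and
`W - wedgeMatrix i (W · i) - f i • Z` has no rows `≥ i` and the same boundary. -/
theorem exists_koszulBd_rows_eq_zero (hhom : ∀ i, (f i).IsHomogeneous (dg i))
    (hpos : ∀ i, 0 < dg i) {D : ℕ}
    (hvan : ∀ d < D, ∀ V : Fin M → MvPolynomial σ K, TupleHom dg V d → syzSum f V = 0 →
      ∃ W, IsAlternating W ∧ V = koszulBd f W)
    {i : ℕ} (hi : i ≤ M) {d : ℕ} (hd : d < D) {V : Fin M → MvPolynomial σ K}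
    (hV : TupleHom dg V d) (hsyz : syzSum f V = 0) (hsupp : ∀ j : Fin M, i ≤ j → V j = 0) :
    ∃ W, IsAlternating W ∧ IsHomogeneousMatrix dg W d ∧ V = koszulBd f W ∧
      ∀ a b : Fin M, i ≤ a → W a b = 0 := by
  induction hi using Nat.decreasingInduction generalizing d V with
  | self =>
    obtain ⟨W₀, hW₀, hVW₀⟩ := hvan d hd V hV hsyz
    obtain ⟨W, hW, hWh, hVW⟩ := exists_isHomogeneousMatrix_of_eq_koszulBd hhom hV hW₀ hVW₀
    exact ⟨W, hW, hWh, hVW, fun a _ ha => absurd a.isLt (by omega)⟩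
  | of_succ i hiM ih =>
    induction d using Nat.strong_induction_on generalizing V with
    | _ d IHd =>
    set ι : Fin M := ⟨i, hiM⟩
    obtain ⟨W, hW, hWh, hVW, hWs⟩ := ih hd hV hsyz fun j hj => hsupp j (by omega)
    by_cases hdι : d < dg ι
    · refine ⟨W, hW, hWh, hVW, fun a b ha => ?_⟩
      rcases ha.eq_or_lt with ha | ha
      · obtain rfl : ι = a := Fin.ext ha
        rw [hW.2, (hWh b ι).2 (by omega), neg_zero]
      · exact hWs a b ha
    rw [not_lt] at hdι
    have hcol : syzSum f (fun k => W k ι) = 0 := by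
      rw [← hsupp ι le_rfl, hVW, koszulBd_apply]
      rfl
    have hcols : ∀ k : Fin M, i ≤ k → W k ι = 0 := fun k hk => by
      rcases hk.eq_or_lt with hk | hk
      · obtain rfl : ι = k := Fin.ext hk
        exact hW.1 ι
      · exact hWs k ι hk
    obtain ⟨Z, hZ, hZh, hWZ, hZs⟩ := IHd (d - dg ι) (Nat.sub_lt_of_pos_le (hpos ι) hdι)
      (by omega) (hWh.tupleHom_col hdι) hcol hcols
    refine ⟨_, (hW.sub (isAlternating_wedgeMatrix ι _)).sub (hZ.mul_left (f ι)),
      (hWh.sub (isHomogeneousMatrix_wedgeMatrix hdι (hWh.tupleHom_col hdι))).sub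
        (hZh.mul_left hdι (hhom ι)), ?_,
      fun a b ha => sub_wedgeMatrix_sub_mul_apply_eq_zero hW (fun a b ha => hWs a b ha)
        (fun a b ha => hZs a b ha) ha b⟩
    rw [koszulBd_sub_wedgeMatrix_sub_mul hcol hWZ, hVW]

theorem isDRegularSeq_of_forall_exists_koszulBd (hhom : ∀ i, (f i).IsHomogeneous (dg i))
    (hpos : ∀ i, 0 < dg i) {D : ℕ}
    (hvan : ∀ d < D, ∀ V : Fin M → MvPolynomial σ K, TupleHom dg V d → syzSum f V = 0 →
      ∃ W, IsAlternating W ∧ V = koszulBd f W) :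
    IsDRegularSeq f dg D := by
  intro i g e hg he hgf
  obtain ⟨c, hc, hcs, hgc⟩ := exists_tupleHom_of_mem_span hhom (hg.mul (hhom i)) hgf
  have hci : c i = 0 := hcs i (lt_irrefl i)
  obtain ⟨W, hW, -, hVW, hWs⟩ := exists_koszulBd_rows_eq_zero hhom hpos hvan i.isLt he
    ((tupleHom_single hg).sub hc) (by rw [syzSum_sub, syzSum_single, hgc, sub_self])
    fun j hj => by
      have hji : j ≠ i := fun h => by rw [h] at hj; omega
      simp [Pi.single_eq_of_ne hji, hcs j (show ¬j < i by omega)]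
  have hgW : g = koszulBd f W i := by
    simpa [hci] using congrFun hVW i
  rw [hgW, koszulBd_apply]
  refine Ideal.sum_mem _ fun k _ => ?_
  rcases lt_trichotomy k i with hki | rfl | hik
  · exact Ideal.mul_mem_left _ _ (Ideal.subset_span ⟨k, hki, rfl⟩)
  · rw [hW.1 k, zero_mul]
    exact Ideal.zero_mem _
  · rw [hWs k i hik, zero_mul]
    exact Ideal.zero_mem _

theorem isDRegularSeq_iff_forall_exists_koszulBd (hhom : ∀ i, (f i).IsHomogeneous (dg i))
    (hpos : ∀ i, 0 < dg i) {D : ℕ} :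
    IsDRegularSeq f dg D ↔ ∀ d < D, ∀ V : Fin M → MvPolynomial σ K, TupleHom dg V d →
      syzSum f V = 0 → ∃ W, IsAlternating W ∧ V = koszulBd f W :=
  ⟨fun hreg _ hd _ hV hsyz => exists_koszulBd_of_isDRegularSeq hhom hreg hd (i := M) hV hsyz
    fun j hj => absurd j.isLt (by omega), isDRegularSeq_of_forall_exists_koszulBd hhom hpos⟩

end KoszulHomology

end GBPaper

/-- for homogeneous `f_1,…,f_M` of positive degrees with
`D = d_reg(I) < ∞`, cryptographic semi-regularity is equivalent to vanishing of
the first Koszul homology in all degrees `≤ D - 1`, and also to the Hilbert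
series of `R/I` being the truncation `[∏ (1-z^{d_j})/(1-z)^n]`. -/
theorem stmt10 {K : Type*} [Field K] {n M : ℕ}
    (f : Fin M → MvPolynomial (Fin n) K) (dg : Fin M → ℕ)
    (hhom : ∀ i, (f i).IsHomogeneous (dg i)) (hpos : ∀ i, 0 < dg i)
    (hArt : ∃ d : ℕ, ∀ g : MvPolynomial (Fin n) K, g.IsHomogeneous d →
      g ∈ Ideal.span (Set.range f)) :
    (IsDRegularSeq f dg (degReg K (Ideal.span (Set.range f))) ↔
      ∀ d : ℕ, d ≤ degReg K (Ideal.span (Set.range f)) - 1 →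
        KoszulHVanish f dg 1 d) ∧
    (IsDRegularSeq f dg (degReg K (Ideal.span (Set.range f))) ↔
      ∀ t : ℕ, (hilbertFn K (Ideal.span (Set.range f)) t : ℤ) =
        truncCoeff (semiRegSeries n dg) t) := by
  set I := Ideal.span (Set.range f)
  have hD : 1 ≤ degReg K I := one_le_degReg hhom hpos hArt
  have hzero : ∀ t, degReg K I ≤ t → hilbertFn K I t = 0 := fun t ht =>
    hilbertFn_eq_zero_iff.mpr fun _ => mem_of_degReg_le hArt ht
  constructor
  · rw [isDRegularSeq_iff_forall_exists_koszulBd hhom hpos]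
    refine forall_congr' fun d => ?_
    rw [koszulHVanish_one_iff, show d ≤ degReg K I - 1 ↔ d < degReg K I by omega]
  · rw [isDRegularSeq_iff_coeff_semiRegSeries hhom hpos (hzero _ le_rfl), Nat.card_fin,
      forall_eq_truncCoeff_iff hD (fun t ht => mod_cast hilbertFn_pos_of_lt_degReg ht)
        (fun t ht => by rw [hzero t ht, Nat.cast_zero])]
end

section
/- Let F = {f_1,...,f_m} ⊂ R = K[x_1,...,x_n] with F^top generating an ideal of finite degree of regularity D, let F^h ⊂ R' = R[y] be the homogenization, and let S_0 be the saturation exponent of ⟨F^h⟩ with respect to y, i.e., the minimal s with (⟨F^h⟩ : y^s) = (⟨F^h⟩ : y^∞). Assume F^top is cryptographic semi-regular. Then the generalized degree of regularity of ⟨F^h⟩ is at most D + S_0. -/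
open MvPolynomial

/-!
Write `I = ⟨F^h⟩` and `J = ⟨F^top⟩`. Setting `y = 0` sends `F^h` to `F^top`, so if `J`
contains every form of degree `e`, every form of degree `e` of `R'` is congruent modulo `I`
to `y` times a form of degree `e - 1`. Hence for `e ≥ D` multiplication by `y` maps
`(R'/I)_e` onto `(R'/I)_{e+1}`. It is also injective once `e ≥ D + S₀`: iterating,
`g ≡ y^S₀ g' (mod I)`, and if `y g ∈ I` then `y^(S₀+1) g' ∈ I`, so `y^S₀ g' ∈ I` by the
choice of `S₀`, whence `g ∈ I`.
-/

namespace MvPolynomial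

variable {R σ : Type*} [CommSemiring R]

theorem degree_le_totalDegree {p : MvPolynomial σ R} {s : σ →₀ ℕ}
    (hs : s ∈ p.support) : s.degree ≤ p.totalDegree :=
  le_totalDegree hs

theorem mem_of_isHomogeneous_of_le {J : Ideal (MvPolynomial σ R)} {D e : ℕ}
    (hD : ∀ p : MvPolynomial σ R, p.IsHomogeneous D → p ∈ J) (he : D ≤ e)
    {p : MvPolynomial σ R} (hp : p.IsHomogeneous e) : p ∈ J := by
  have hsplit : homogeneousSubmodule σ R e =
      homogeneousSubmodule σ R (e - D) * homogeneousSubmodule σ R D := by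
    rw [← homogeneousSubmodule_one_pow R (e - D), ← homogeneousSubmodule_one_pow R D,
      ← pow_add, Nat.sub_add_cancel he, homogeneousSubmodule_one_pow]
  have hle : homogeneousSubmodule σ R (e - D) * homogeneousSubmodule σ R D ≤
      J.restrictScalars R :=
    Submodule.mul_le.mpr fun a _ b hb => J.mul_mem_left a (hD b hb)
  exact hle (hsplit ▸ (mem_homogeneousSubmodule e p).mpr hp)

attribute [local instance] MvPolynomial.gradedAlgebra in
theorem exists_homogeneousComponent_mul_eq {t : MvPolynomial σ R} {d : ℕ}
    (ht : t.IsHomogeneous d) (a : MvPolynomial σ R) (e : ℕ) :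
    ∃ c : MvPolynomial σ R, c.IsHomogeneous (e - d) ∧ (e < d → c = 0) ∧
      homogeneousComponent e (a * t) = c * t := by
  have ht' : t ∈ homogeneousSubmodule σ R d := (mem_homogeneousSubmodule d t).mpr ht
  have hcomp : ∀ (k : ℕ) (p : MvPolynomial σ R),
      homogeneousComponent k p = (DirectSum.decompose (homogeneousSubmodule σ R) p k : _) :=
    fun k p => (decomposition.decompose'_apply p k).symm
  by_cases hde : d ≤ e
  · refine ⟨homogeneousComponent (e - d) a, homogeneousComponent_isHomogeneous _ _,
      fun h => absurd hde (not_le.mpr h), ?_⟩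
    rw [hcomp, hcomp, DirectSum.coe_decompose_mul_of_right_mem_of_le _ ht' hde]
  · refine ⟨0, isHomogeneous_zero _ _ _, fun _ => rfl, ?_⟩
    rw [hcomp, DirectSum.coe_decompose_mul_of_right_mem_of_not_le _ ht' hde, zero_mul]

end MvPolynomial

theorem Ideal.exists_saturation_exponent {A : Type*} [CommRing A] [IsNoetherianRing A]
    (I : Ideal A) (y : A) :
    ∃ s : ℕ, ∀ g : A, (∃ k : ℕ, y ^ k * g ∈ I) → y ^ s * g ∈ I := by
  let colon : ℕ →o Submodule A A :=
    ⟨fun k => Submodule.comap (LinearMap.mulLeft A (y ^ k)) I,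
      monotone_nat_of_le_succ fun k g hg => by
        simpa [pow_succ', mul_assoc] using I.mul_mem_left y hg⟩
  obtain ⟨s, hs⟩ := monotone_stabilizes_iff_noetherian.mpr inferInstance colon
  refine ⟨s, fun g ⟨k, hk⟩ => ?_⟩
  have hgk : g ∈ colon k := hk
  show g ∈ colon s
  rcases le_total k s with hks | hsk
  · exact colon.monotone hks hgk
  · exact hs k hsk ▸ hgk

namespace GBPaper

section TupleHom

variable {K σ : Type*} [Field K] {M : ℕ} {d : Fin M → ℕ}

theorem exists_tupleHom_of_mem_span_s13 {t : Fin M → MvPolynomial σ K}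
    (ht : ∀ i, (t i).IsHomogeneous (d i)) {p : MvPolynomial σ K} {e : ℕ}
    (hp : p.IsHomogeneous e) (hmem : p ∈ Ideal.span (Set.range t)) :
    ∃ b : Fin M → MvPolynomial σ K, TupleHom d b e ∧ p = ∑ i, b i * t i := by
  obtain ⟨a, rfl⟩ := Ideal.mem_span_range_iff_exists_fun.mp hmem
  choose b hb using fun i => exists_homogeneousComponent_mul_eq (ht i) (a i) e
  refine ⟨b, fun i => ⟨(hb i).1, (hb i).2.1⟩, ?_⟩
  rw [← homogeneousComponent_eq_self hp, map_sum]
  exact Finset.sum_congr rfl fun i _ => (hb i).2.2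

theorem TupleHom.isHomogeneous_sum_mul {b s : Fin M → MvPolynomial σ K} {e : ℕ}
    (hb : TupleHom d b e) (hs : ∀ i, (s i).IsHomogeneous (d i)) :
    (∑ i, b i * s i).IsHomogeneous e := by
  refine IsHomogeneous.sum _ _ _ fun i _ => ?_
  rcases lt_or_ge e (d i) with hlt | hle
  · rw [(hb i).2 hlt, zero_mul]
    exact isHomogeneous_zero _ _ _
  · simpa [Nat.sub_add_cancel hle] using (hb i).1.mul (hs i)

theorem TupleHom.rename {τ : Type*} {b : Fin M → MvPolynomial σ K} {e : ℕ}
    (hb : TupleHom d b e) (φ : σ → τ) : TupleHom d (fun i => rename φ (b i)) e :=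
  fun i => ⟨(hb i).1.rename_isHomogeneous, fun h => by simp [(hb i).2 h]⟩

end TupleHom

theorem hilbertFn_succ_eq {K σ : Type*} [Field K] (I : Ideal (MvPolynomial σ K))
    {ℓ : MvPolynomial σ K} (hℓ : ℓ.IsHomogeneous 1) (e : ℕ)
    (hsurj : ∀ h : MvPolynomial σ K, h.IsHomogeneous (e + 1) →
      ∃ g : MvPolynomial σ K, g.IsHomogeneous e ∧ h - ℓ * g ∈ I)
    (hinj : ∀ g : MvPolynomial σ K, g.IsHomogeneous e → ℓ * g ∈ I → g ∈ I) :
    hilbertFn K I (e + 1) = hilbertFn K I e := by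
  let q := (Ideal.Quotient.mkₐ K I).toLinearMap
  let μ := LinearMap.mulLeft K (q ℓ)
  have hq_mul : ∀ p, q (ℓ * p) = μ (q p) := fun p => map_mul (Ideal.Quotient.mkₐ K I) ℓ p
  have hmaps : ∀ x ∈ (homogeneousSubmodule σ K e).map q,
      μ x ∈ (homogeneousSubmodule σ K (e + 1)).map q := by
    rintro _ ⟨p, hp, rfl⟩
    exact ⟨ℓ * p, by simpa [add_comm] using hℓ.mul hp, hq_mul p⟩
  have hbij : Function.Bijective (μ.restrict hmaps) := by
    constructor
    · rw [injective_iff_map_eq_zero]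
      rintro ⟨_, p, hp, rfl⟩ h0
      have hℓp : ℓ * p ∈ I := Ideal.Quotient.eq_zero_iff_mem.mp
        ((hq_mul p).trans (congrArg Subtype.val h0))
      exact Subtype.ext (Ideal.Quotient.eq_zero_iff_mem.mpr (hinj p hp hℓp))
    · rintro ⟨_, h, hh, rfl⟩
      obtain ⟨g, hg, hsub⟩ := hsurj h hh
      refine ⟨⟨q g, g, hg, rfl⟩, Subtype.ext ?_⟩
      exact (hq_mul g).symm.trans (Ideal.Quotient.eq.mpr (by simpa using I.neg_mem hsub))
  exact (LinearEquiv.ofBijective _ hbij).finrank_eq.symm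

section Homogenization

variable {K : Type*} [Field K] {n : ℕ}

theorem homog_eq_sum (p : MvPolynomial (Fin n) K) :
    homog p = ∑ s ∈ p.support,
      rename Fin.castSucc (monomial s (coeff s p)) * yvar K n ^ (p.totalDegree - s.degree) := by
  refine Finset.sum_congr rfl fun s _ => ?_
  rw [rename_monomial, yvar, X_pow_eq_monomial, monomial_mul, mul_one, extX,
    Finsupp.embDomain_eq_mapDomain]
  rfl

theorem isHomogeneous_homog (p : MvPolynomial (Fin n) K) :
    (homog p).IsHomogeneous p.totalDegree := by
  rw [homog_eq_sum]
  refine IsHomogeneous.sum _ _ _ fun s hs => ?_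
  have h := ((isHomogeneous_monomial (d := s) (coeff s p) rfl).rename_isHomogeneous
    (f := Fin.castSucc)).mul
      (isHomogeneous_X_pow (R := K) (Fin.last n) (p.totalDegree - s.degree))
  rwa [Nat.add_sub_cancel' (degree_le_totalDegree hs)] at h

theorem topPartR_rename_castSucc (p : MvPolynomial (Fin n) K) :
    topPartR (rename Fin.castSucc p) = p := by
  rw [topPartR, aeval_rename]
  convert aeval_X_left_apply p
  ext1 j
  simp

theorem topPartR_yvar : topPartR (yvar K n) = 0 := by
  simp [topPartR, yvar]

theorem topPartR_homog (p : MvPolynomial (Fin n) K) : topPartR (homog p) = topPart p := by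
  classical
  rw [homog_eq_sum, topPart, homogeneousComponent_apply, Finset.sum_filter]
  simp only [topPartR, map_sum, map_mul, map_pow]
  refine Finset.sum_congr rfl fun s hs => ?_
  rw [← topPartR, ← topPartR, topPartR_rename_castSucc, topPartR_yvar, zero_pow_eq]
  have := degree_le_totalDegree hs
  split_ifs <;> first | omega | simp

theorem isHomogeneous_topPartR {g : MvPolynomial (Fin (n + 1)) K} {e : ℕ}
    (hg : g.IsHomogeneous e) : (topPartR g).IsHomogeneous e := by
  have h := hg.aeval (n := 1) (Fin.lastCases 0 fun i => (X i : MvPolynomial (Fin n) K))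
    fun i => by induction i using Fin.lastCases <;> simp [isHomogeneous_X, isHomogeneous_zero]
  rwa [one_mul] at h

theorem sub_rename_topPartR_mem_span_yvar (g : MvPolynomial (Fin (n + 1)) K) :
    g - rename Fin.castSucc (topPartR g) ∈ Ideal.span {yvar K n} := by
  let π := Ideal.Quotient.mkₐ K (Ideal.span {yvar K n})
  have hπ : (π.comp (rename Fin.castSucc)).comp (aeval (Fin.lastCases 0 X)) = π := by
    refine algHom_ext (Fin.lastCases ?_ fun j => ?_)
    · simp only [AlgHom.comp_apply, aeval_X, Fin.lastCases_last, map_zero]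
      exact (Ideal.Quotient.eq_zero_iff_mem.mpr (Ideal.mem_span_singleton_self _)).symm
    · simp
  exact Ideal.Quotient.eq.mp (congrArg (· g) hπ).symm

theorem exists_sub_yvar_mul_mem {M : ℕ} (f : Fin M → MvPolynomial (Fin n) K) {e : ℕ}
    (hJ : ∀ p : MvPolynomial (Fin n) K, p.IsHomogeneous e →
      p ∈ Ideal.span (Set.range fun i => topPart (f i)))
    {h : MvPolynomial (Fin (n + 1)) K} (hh : h.IsHomogeneous e) :
    ∃ g : MvPolynomial (Fin (n + 1)) K, g.IsHomogeneous (e - 1) ∧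
      h - yvar K n * g ∈ Ideal.span (Set.range fun i => homog (f i)) := by
  have hh₀ := isHomogeneous_topPartR hh
  obtain ⟨b, hb, htop⟩ := exists_tupleHom_of_mem_span_s13 (d := fun i => (f i).totalDegree)
    (fun i => homogeneousComponent_isHomogeneous _ _) hh₀ (hJ _ hh₀)
  set w := h - ∑ i, rename Fin.castSucc (b i) * homog (f i)
  have hhw : h - w ∈ Ideal.span (Set.range fun i => homog (f i)) := by
    rw [sub_sub_cancel]
    exact Ideal.sum_mem _ fun i _ => Ideal.mul_mem_left _ _ (Ideal.subset_span ⟨i, rfl⟩)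
  have hw : w.IsHomogeneous e :=
    hh.sub ((hb.rename _).isHomogeneous_sum_mul fun i => isHomogeneous_homog _)
  have hw0 : topPartR w = 0 := calc
    topPartR w =
        topPartR h - ∑ i, topPartR (rename Fin.castSucc (b i)) * topPartR (homog (f i)) := by
      simp only [w, topPartR, map_sub, map_sum, map_mul]
    _ = 0 := by simp only [topPartR_rename_castSucc, topPartR_homog, htop, topPart, sub_self]
  obtain ⟨g₀, hg₀⟩ := Ideal.mem_span_singleton'.mp
    (by simpa [hw0] using sub_rename_topPartR_mem_span_yvar w)
  obtain ⟨g, hg, -, hgw⟩ := exists_homogeneousComponent_mul_eq (t := yvar K n)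
    (isHomogeneous_X K (Fin.last n)) g₀ e
  have hwg : w = yvar K n * g := by
    rw [mul_comm, ← hgw, hg₀, homogeneousComponent_eq_self hw]
  exact ⟨g, hg, hwg ▸ hhw⟩

end Homogenization

section Saturation

variable {K : Type*} [Field K] {n M : ℕ} (f : Fin M → MvPolynomial (Fin n) K) {D : ℕ}

theorem exists_sub_yvar_pow_mul_mem
    (hJ : ∀ e, D ≤ e → ∀ p : MvPolynomial (Fin n) K, p.IsHomogeneous e →
      p ∈ Ideal.span (Set.range fun i => topPart (f i)))
    (k : ℕ) {e : ℕ} (he : D + k ≤ e) {h : MvPolynomial (Fin (n + 1)) K}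
    (hh : h.IsHomogeneous e) :
    ∃ g : MvPolynomial (Fin (n + 1)) K, g.IsHomogeneous (e - k) ∧
      h - yvar K n ^ k * g ∈ Ideal.span (Set.range fun i => homog (f i)) := by
  induction k with
  | zero => exact ⟨h, hh, by simp⟩
  | succ k ih =>
    obtain ⟨g, hg, hhg⟩ := ih (by omega)
    obtain ⟨g', hg', hgg'⟩ := exists_sub_yvar_mul_mem f (hJ (e - k) (by omega)) hg
    refine ⟨g', by rwa [Nat.sub_sub] at hg', ?_⟩
    have hsplit : h - yvar K n ^ (k + 1) * g' =
        (h - yvar K n ^ k * g) + yvar K n ^ k * (g - yvar K n * g') := by ring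
    rw [hsplit]
    exact Ideal.add_mem _ hhg (Ideal.mul_mem_left _ _ hgg')

theorem mem_of_yvar_mul_mem
    (hJ : ∀ e, D ≤ e → ∀ p : MvPolynomial (Fin n) K, p.IsHomogeneous e →
      p ∈ Ideal.span (Set.range fun i => topPart (f i)))
    {s : ℕ} (hs : ∀ g : MvPolynomial (Fin (n + 1)) K,
      (∃ k : ℕ, yvar K n ^ k * g ∈ Ideal.span (Set.range fun i => homog (f i))) →
        yvar K n ^ s * g ∈ Ideal.span (Set.range fun i => homog (f i)))
    {e : ℕ} (he : D + s ≤ e) {g : MvPolynomial (Fin (n + 1)) K} (hg : g.IsHomogeneous e)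
    (hyg : yvar K n * g ∈ Ideal.span (Set.range fun i => homog (f i))) :
    g ∈ Ideal.span (Set.range fun i => homog (f i)) := by
  obtain ⟨g', -, hgg'⟩ := exists_sub_yvar_pow_mul_mem f hJ s he hg
  have hpow : yvar K n ^ (s + 1) * g' ∈ Ideal.span (Set.range fun i => homog (f i)) := by
    have hsplit : yvar K n ^ (s + 1) * g' =
        yvar K n * g - yvar K n * (g - yvar K n ^ s * g') := by ring
    rw [hsplit]
    exact Ideal.sub_mem _ hyg (Ideal.mul_mem_left _ _ hgg')
  simpa using Ideal.add_mem _ hgg' (hs g' ⟨s + 1, hpow⟩)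

end Saturation

end GBPaper

open GBPaper

theorem stmt13_general {K : Type*} [Field K] {n M : ℕ}
    (f : Fin M → MvPolynomial (Fin n) K)
    (hArt : ∃ d : ℕ, ∀ g : MvPolynomial (Fin n) K, g.IsHomogeneous d →
      g ∈ Ideal.span (Set.range fun i => topPart (f i)))
    (S₀ : ℕ)
    (hS₀ : S₀ = sInf {s : ℕ | ∀ g : MvPolynomial (Fin (n + 1)) K,
      (∃ k : ℕ, yvar K n ^ k * g ∈ Ideal.span (Set.range fun i => homog (f i))) →
        yvar K n ^ s * g ∈ Ideal.span (Set.range fun i => homog (f i))}) :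
    ∀ d : ℕ,
      degReg K (Ideal.span (Set.range fun i => topPart (f i))) + S₀ ≤ d →
      hilbertFn K (Ideal.span (Set.range fun i => homog (f i))) d =
        hilbertFn K (Ideal.span (Set.range fun i => homog (f i)))
          (degReg K (Ideal.span (Set.range fun i => topPart (f i))) + S₀) := by
  set D := degReg K (Ideal.span (Set.range fun i => topPart (f i)))
  have hJ : ∀ e, D ≤ e → ∀ p : MvPolynomial (Fin n) K, p.IsHomogeneous e →
      p ∈ Ideal.span (Set.range fun i => topPart (f i)) :=
    fun e he p hp => mem_of_isHomogeneous_of_le (Nat.sInf_mem hArt) he hp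
  have hS : ∀ g : MvPolynomial (Fin (n + 1)) K,
      (∃ k : ℕ, yvar K n ^ k * g ∈ Ideal.span (Set.range fun i => homog (f i))) →
        yvar K n ^ S₀ * g ∈ Ideal.span (Set.range fun i => homog (f i)) :=
    hS₀ ▸ Nat.sInf_mem (Ideal.exists_saturation_exponent _ (yvar K n))
  have hstep : ∀ e, D + S₀ ≤ e →
      hilbertFn K (Ideal.span (Set.range fun i => homog (f i))) (e + 1) =
        hilbertFn K (Ideal.span (Set.range fun i => homog (f i))) e := fun e he =>
    hilbertFn_succ_eq _ (isHomogeneous_X K (Fin.last n)) e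
      (fun _ hh => exists_sub_yvar_mul_mem f (hJ _ (by omega)) hh)
      (fun _ hg hyg => mem_of_yvar_mul_mem f hJ hS he hg hyg)
  intro d hd
  induction d, hd using Nat.le_induction with
  | base => rfl
  | succ d hd ih => rw [hstep d hd, ih]

/-- if `F^top` is cryptographic semi-regular with
`D = d_reg(⟨F^top⟩) < ∞` and `S₀` is the saturation exponent of `⟨F^h⟩` with
respect to `y`, then the Hilbert function of `R'/⟨F^h⟩` is constant from degree
`D + S₀` on (i.e. the generalized degree of regularity of `⟨F^h⟩` is `≤ D + S₀`). -/
theorem stmt13 {K : Type*} [Field K] {n M : ℕ}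
    (f : Fin M → MvPolynomial (Fin n) K) (dg : Fin M → ℕ)
    (hdeg : ∀ i, (f i).totalDegree = dg i) (hpos : ∀ i, 0 < dg i)
    (hArt : ∃ d : ℕ, ∀ g : MvPolynomial (Fin n) K, g.IsHomogeneous d →
      g ∈ Ideal.span (Set.range fun i => topPart (f i)))
    (hcsr : IsDRegularSeq (fun i => topPart (f i)) dg
      (degReg K (Ideal.span (Set.range fun i => topPart (f i)))))
    (S₀ : ℕ)
    (hS₀ : S₀ = sInf {s : ℕ | ∀ g : MvPolynomial (Fin (n + 1)) K,
      (∃ k : ℕ, yvar K n ^ k * g ∈ Ideal.span (Set.range fun i => homog (f i))) →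
        yvar K n ^ s * g ∈ Ideal.span (Set.range fun i => homog (f i))}) :
    ∀ d : ℕ,
      degReg K (Ideal.span (Set.range fun i => topPart (f i))) + S₀ ≤ d →
      hilbertFn K (Ideal.span (Set.range fun i => homog (f i))) d =
        hilbertFn K (Ideal.span (Set.range fun i => homog (f i)))
          (degReg K (Ideal.span (Set.range fun i => topPart (f i))) + S₀) :=
  stmt13_general f hArt S₀ hS₀
end

section
/- Let F ⊂ R = K[x_1,...,x_n] with D := d_reg(⟨F^top⟩) < ∞ and let G_hom be the reduced Gröbner basis of ⟨F^h⟩ ⊂ R' = R[y] with respect to the homogenized DRL ordering. Then for every monomial M in x_1,...,x_n of degree D, there exists g ∈ G_hom of degree ≤ D with LM(g) dividing M; equivalently ⟨LM((G_hom)_{≤D})⟩_{R'} ∩ R_D = R_D. Moreover, any g ∈ (G_hom)_D whose top part g|_{y=0} is nonzero has g|_{y=0} equal to its leading term (a single term). -/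
open MvPolynomial

open GBPaper

/-
Since `R_D ⊆ ⟨F^top⟩`, a monomial `x^s` of degree `D` is `∑ aᵢ fᵢ^top`, so `P = ∑ aᵢ fᵢ^h ∈ ⟨F^h⟩`
specializes to `x^s` at `y = 0`. As `⟨F^h⟩` is homogeneous, the degree-`D` component `Q` of `P` is
still in it, and `x^s` is the only `y`-free monomial of `Q`. Homogenized DRL ranks a `y`-free
monomial above every monomial of the same degree divisible by `y`, so `LM(Q) = x^s`, and some
`LM(g)`, `g ∈ G_hom`, divides it.

Elements of a reduced Gröbner basis of a homogeneous ideal for a graded order are homogeneous.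
Hence every `y`-free monomial `u` of `g ∈ (G_hom)_D` has degree `D` and is divisible by some
`LM(g')`; reducedness forces `g' = g`, and then `LM(g) ≤ u ≤ LM(g)`.
-/

namespace GBPaper

section MonomialOrder

variable {K : Type*} [Field K] {σ : Type*} {m : MonomialOrder σ}

theorem MonIsGraded.degree_lm (hm : MonIsGraded m) {f : MvPolynomial σ K} (hf : f ≠ 0) :
    (lm m f).degree = f.totalDegree :=
  le_antisymm (le_totalDegree (m.degree_mem_support hf)) <| Finset.sup_le fun _ hs =>
    not_lt.1 fun h => not_lt.2 (m.le_degree hs) (hm _ _ h)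

section

attribute [local instance] MvPolynomial.gradedAlgebra

theorem isHomogeneousIdeal_span {S : Set (MvPolynomial σ K)}
    (hS : ∀ p ∈ S, ∃ e, p.IsHomogeneous e) : IsHomogeneousIdeal (Ideal.span S) :=
  fun _ hf d => homogeneousComponent_mem_of_mem
    (Ideal.homogeneous_span _ S fun p hp => (hS p hp).imp fun _ he => he) hf d

end

/-- The part of `g` below its top degree lies in the homogeneous ideal, yet by reducedness none of
its monomials is divisible by a leading monomial of the basis. -/
theorem IsReducedGB.isHomogeneous (hm : MonIsGraded m) {J : Ideal (MvPolynomial σ K)}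
    (hJ : IsHomogeneousIdeal J) {G : Finset (MvPolynomial σ K)} (hG : IsReducedGB m J G)
    {g : MvPolynomial σ K} (hg : g ∈ G) : g.IsHomogeneous g.totalDegree := by
  set d := g.totalDegree
  set r := g - homogeneousComponent d g
  have coeff_r (u : σ →₀ ℕ) : coeff u r = if u.degree = d then 0 else coeff u g := by
    simp only [r, coeff_sub, coeff_homogeneousComponent]
    split_ifs <;> simp
  suffices r = 0 by
    rw [sub_eq_zero.1 this]
    exact homogeneousComponent_isHomogeneous d g
  by_contra hr
  obtain ⟨g', hg', hle⟩ := hG.isGB r (J.sub_mem (hG.subset hg) (hJ g (hG.subset hg) d)) hr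
  have hlm := coeff_r (lm m r) ▸ m.coeff_degree_ne_zero_iff.2 hr
  split_ifs at hlm with hdeg
  · exact hlm rfl
  have hlm_mem : lm m r ∈ g.support := mem_support_iff.2 hlm
  obtain rfl | hne := eq_or_ne g' g
  · have hgne : g' ≠ 0 := fun h => hG.zero_not_mem (h ▸ hg)
    have := Finsupp.degree_mono hle
    rw [hm.degree_lm hgne] at this
    exact hdeg (le_antisymm (le_totalDegree hlm_mem) this)
  · exact hG.reduced g hg g' hg' hne.symm _ hlm_mem hle

end MonomialOrder

section Homogenization

variable {K : Type*} [Field K] {n : ℕ}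

theorem extX_castSucc (s : Fin n →₀ ℕ) (i : Fin n) : extX s i.castSucc = s i :=
  Finsupp.embDomain_apply_self Fin.castSuccEmb s i

theorem extX_last (s : Fin n →₀ ℕ) : extX s (Fin.last n) = 0 :=
  Finsupp.embDomain_of_notMem_range _ _ _ (by simp)

theorem extX_restr {a : Fin (n + 1) →₀ ℕ} (h : a (Fin.last n) = 0) : extX (restr a) = a := by
  ext i
  induction i using Fin.lastCases with
  | last => rw [extX_last, h]
  | cast j => rw [extX_castSucc]; rfl

theorem degree_extX (s : Fin n →₀ ℕ) : (extX s).degree = s.degree := by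
  rw [extX, Finsupp.embDomain_eq_mapDomain, Finsupp.degree_mapDomain]

theorem rename_castSucc_monomial (s : Fin n →₀ ℕ) (c : K) :
    rename Fin.castSucc (monomial s c) = monomial (extX s) c := by
  rw [rename_monomial, extX, Finsupp.embDomain_eq_mapDomain, Fin.coe_castSuccEmb]

theorem setYZero_monomial (a : Fin (n + 1) →₀ ℕ) (c : K) :
    setYZero (monomial a c) = if a (Fin.last n) = 0 then monomial a c else 0 := by
  rw [setYZero, aeval_monomial]
  split_ifs with h
  · rw [monomial_eq, algebraMap_eq]
    congr 1
    refine Finsupp.prod_congr fun i hi => ?_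
    rw [if_neg (by rintro rfl; exact Finsupp.mem_support_iff.1 hi h)]
  · rw [Finsupp.prod, Finset.prod_eq_zero (Finsupp.mem_support_iff.2 h) (by simp [h]), mul_zero]

theorem coeff_setYZero (g : MvPolynomial (Fin (n + 1)) K) (u : Fin (n + 1) →₀ ℕ) :
    coeff u (setYZero g) = if u (Fin.last n) = 0 then coeff u g else 0 := by
  induction g using MvPolynomial.induction_on' with
  | monomial a c =>
    rw [setYZero_monomial]
    obtain rfl | hau := eq_or_ne a u
    · split_ifs <;> simp
    · simp [apply_ite, coeff_monomial, hau]
  | add p q hp hq =>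
    simp only [setYZero, map_add, coeff_add] at hp hq ⊢
    rw [hp, hq]
    split_ifs <;> simp

theorem setYZero_rename_castSucc (p : MvPolynomial (Fin n) K) :
    setYZero (rename Fin.castSucc p) = rename Fin.castSucc p := by
  rw [setYZero, aeval_rename, rename_eq_aeval]
  congr 2 with i
  simp [Fin.castSucc_ne_last]

theorem homog_isHomogeneous (f : MvPolynomial (Fin n) K) :
    (homog f).IsHomogeneous f.totalDegree :=
  IsHomogeneous.sum _ _ _ fun s hs => isHomogeneous_monomial _ <| by
    rw [map_add, degree_extX, Finsupp.degree_single]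
    have : s.degree ≤ f.totalDegree := le_totalDegree hs
    omega

theorem setYZero_homog (f : MvPolynomial (Fin n) K) :
    setYZero (homog f) = rename Fin.castSucc (topPart f) := by
  rw [homog, topPart, homogeneousComponent_apply, map_sum, Finset.sum_filter]
  simp only [setYZero, map_sum]
  refine Finset.sum_congr rfl fun s hs => ?_
  rw [← setYZero, setYZero_monomial, rename_castSucc_monomial]
  have : s.degree ≤ f.totalDegree := le_totalDegree hs
  simp only [Finsupp.add_apply, extX_last, Finsupp.single_eq_same, zero_add]
  by_cases h : s.degree = f.totalDegree
  · simp [h]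
  · rw [if_neg (by omega), if_neg h]

end Homogenization

theorem IsDegRevLex.monIsGraded {n : ℕ} {m : MonomialOrder (Fin n)} (hm : IsDegRevLex m) :
    MonIsGraded m :=
  fun a b h => (hm a b).2 (.inl h)

section DegRevLex

variable {K : Type*} [Field K] {n : ℕ} {m' : MonomialOrder (Fin (n + 1))}

theorem IsDegRevLex.lt_of_last_eq_zero (hm : IsDegRevLex m') {a b : Fin (n + 1) →₀ ℕ}
    (hdeg : a.degree = b.degree) (ha : a (Fin.last n) ≠ 0) (hb : b (Fin.last n) = 0) :
    m'.toSyn a < m'.toSyn b :=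
  (hm a b).2 <| .inr ⟨hdeg, Fin.last n, by omega, fun j hj => absurd hj (Fin.le_last j).not_gt⟩

theorem IsDegRevLex.lm_eq (hm : IsDegRevLex m') {Q : MvPolynomial (Fin (n + 1)) K}
    {t : Fin (n + 1) →₀ ℕ} (hQ : Q.IsHomogeneous t.degree) (ht : t ∈ Q.support)
    (ht0 : t (Fin.last n) = 0) (huniq : ∀ u ∈ Q.support, u (Fin.last n) = 0 → u = t) :
    lm m' Q = t := by
  refine m'.toSyn.injective (le_antisymm (m'.degree_le_iff.2 fun u hu => ?_) (m'.le_degree ht))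
  by_cases hu0 : u (Fin.last n) = 0
  · rw [huniq u hu hu0]
  · exact (hm.lt_of_last_eq_zero (hQ.degree_eq_sum_deg_support hu).symm hu0 ht0).le

theorem setYZero_eq_monomial {g : MvPolynomial (Fin (n + 1)) K} {t : Fin (n + 1) →₀ ℕ}
    (h0 : setYZero g ≠ 0) (huniq : ∀ u ∈ g.support, u (Fin.last n) = 0 → u = t) :
    setYZero g = monomial t (coeff t g) := by
  have coeff_eq_zero {v} (hv : v ≠ t) (hv0 : v (Fin.last n) = 0) : coeff v g = 0 :=
    notMem_support_iff.1 fun hv' => hv (huniq v hv' hv0)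
  have ht0 : t (Fin.last n) = 0 := by
    obtain ⟨u, hu⟩ := ne_zero_iff.1 h0
    rw [coeff_setYZero] at hu
    split_ifs at hu with hu0
    · rwa [← huniq u (mem_support_iff.2 hu) hu0]
    · exact absurd rfl hu
  ext v
  rw [coeff_setYZero, coeff_monomial]
  obtain rfl | hv := eq_or_ne v t
  · simp [ht0]
  · rw [if_neg (Ne.symm hv)]
    split_ifs with hv0
    exacts [coeff_eq_zero hv hv0, rfl]

end DegRevLex

section Homogenized

variable {K : Type*} [Field K] {n M : ℕ} {f : Fin M → MvPolynomial (Fin n) K}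
  {m' : MonomialOrder (Fin (n + 1))} {G : Finset (MvPolynomial (Fin (n + 1)) K)}

theorem isHomogeneousIdeal_span_homog (f : Fin M → MvPolynomial (Fin n) K) :
    IsHomogeneousIdeal (Ideal.span (Set.range fun i => homog (f i))) :=
  isHomogeneousIdeal_span <| by
    rintro _ ⟨i, rfl⟩
    exact ⟨_, homog_isHomogeneous (f i)⟩

theorem exists_mem_span_homog_setYZero_eq {p : MvPolynomial (Fin n) K}
    (hp : p ∈ Ideal.span (Set.range fun i => topPart (f i))) :
    ∃ P ∈ Ideal.span (Set.range fun i => homog (f i)),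
      setYZero P = rename Fin.castSucc p := by
  obtain ⟨a, rfl⟩ := Ideal.mem_span_range_iff_exists_fun.1 hp
  refine ⟨∑ i, rename Fin.castSucc (a i) * homog (f i),
    Ideal.sum_mem _ fun i _ => Ideal.mul_mem_left _ _ (Ideal.subset_span ⟨i, rfl⟩), ?_⟩
  simp only [setYZero, map_sum, map_mul]
  simp only [← setYZero.eq_1, setYZero_rename_castSucc, setYZero_homog]

theorem exists_lm_le_extX (hm : IsDegRevLex m')
    (hG : IsReducedGB m' (Ideal.span (Set.range fun i => homog (f i))) G) {d : ℕ}
    (hd : ∀ p : MvPolynomial (Fin n) K, p.IsHomogeneous d →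
      p ∈ Ideal.span (Set.range fun i => topPart (f i)))
    {s : Fin n →₀ ℕ} (hs : s.degree = d) : ∃ g ∈ G, lm m' g ≤ extX s := by
  obtain ⟨P, hPJ, hP⟩ := exists_mem_span_homog_setYZero_eq (hd _ (isHomogeneous_monomial 1 hs))
  rw [rename_castSucc_monomial] at hP
  have coeff_P {u} (hu0 : u (Fin.last n) = 0) : coeff u P = if extX s = u then 1 else 0 := by
    rw [← coeff_monomial, ← hP, coeff_setYZero, if_pos hu0]
  set Q := homogeneousComponent d P
  have hsQ : coeff (extX s) Q = 1 := by
    rw [coeff_homogeneousComponent, if_pos (by rw [degree_extX, hs]), coeff_P (extX_last s),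
      if_pos rfl]
  have hQ : Q ≠ 0 := fun h => by simp [h] at hsQ
  have hlm : lm m' Q = extX s := by
    refine hm.lm_eq (degree_extX s ▸ hs ▸ homogeneousComponent_isHomogeneous d P)
      (mem_support_iff.2 (by simp [hsQ])) (extX_last s) fun u hu hu0 => ?_
    rw [mem_support_iff, coeff_homogeneousComponent, coeff_P hu0] at hu
    by_contra hne
    simp [Ne.symm hne] at hu
  obtain ⟨g, hg, hle⟩ := hG.isGB Q (isHomogeneousIdeal_span_homog f P hPJ d) hQ
  exact ⟨g, hg, hlm ▸ hle⟩

theorem setYZero_eq_monomial_lm (hm : IsDegRevLex m')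
    (hG : IsReducedGB m' (Ideal.span (Set.range fun i => homog (f i))) G) {d : ℕ}
    (hd : ∀ p : MvPolynomial (Fin n) K, p.IsHomogeneous d →
      p ∈ Ideal.span (Set.range fun i => topPart (f i)))
    {g : MvPolynomial (Fin (n + 1)) K} (hg : g ∈ G) (hgd : g.totalDegree = d)
    (h0 : setYZero g ≠ 0) : setYZero g = monomial (lm m' g) (coeff (lm m' g) g) := by
  have hhom := hG.isHomogeneous hm.monIsGraded (isHomogeneousIdeal_span_homog f) hg
  refine setYZero_eq_monomial h0 fun u hu hu0 => ?_
  have hud : (restr u).degree = d := by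
    rw [← degree_extX, extX_restr hu0, ← hgd]
    exact (hhom.degree_eq_sum_deg_support hu).symm
  obtain ⟨g', hg', hle⟩ := exists_lm_le_extX hm hG hd hud
  rw [extX_restr hu0] at hle
  obtain rfl | hne := eq_or_ne g' g
  · exact m'.toSyn.injective (le_antisymm (m'.le_degree hu) (m'.toSyn_monotone hle))
  · exact absurd hle (hG.reduced g hg g' hg' hne.symm u hu)

end Homogenized

end GBPaper

theorem stmt16_general {K : Type*} [Field K] {n M : ℕ}
    (f : Fin M → MvPolynomial (Fin n) K)
    (hArt : ∃ d : ℕ, ∀ g : MvPolynomial (Fin n) K, g.IsHomogeneous d →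
      g ∈ Ideal.span (Set.range fun i => topPart (f i)))
    (m' : MonomialOrder (Fin (n + 1))) (hm' : IsDegRevLex m')
    (Gh : Finset (MvPolynomial (Fin (n + 1)) K))
    (hGh : IsReducedGB m' (Ideal.span (Set.range fun i => homog (f i))) Gh) :
    (∀ s : Fin n →₀ ℕ,
        s.degree = degReg K (Ideal.span (Set.range fun i => topPart (f i))) →
        ∃ g ∈ Gh,
          g.totalDegree ≤ degReg K (Ideal.span (Set.range fun i => topPart (f i))) ∧
          lm m' g ≤ extX s) ∧
    (∀ g ∈ Gh,
        g.totalDegree = degReg K (Ideal.span (Set.range fun i => topPart (f i))) →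
        setYZero g ≠ 0 →
        setYZero g =
          MvPolynomial.monomial (lm m' g) (MvPolynomial.coeff (lm m' g) g)) := by
  have hD := Nat.sInf_mem hArt
  refine ⟨fun s hs => ?_, fun g hg hgD => setYZero_eq_monomial_lm hm' hGh hD hg hgD⟩
  obtain ⟨g, hg, hle⟩ := exists_lm_le_extX hm' hGh hD hs
  refine ⟨g, hg, ?_, hle⟩
  calc g.totalDegree = (lm m' g).degree :=
        (hm'.monIsGraded.degree_lm fun h => hGh.zero_not_mem (h ▸ hg)).symm
    _ ≤ (extX s).degree := Finsupp.degree_mono hle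
    _ = _ := by rw [degree_extX, hs]

/-- with `D = d_reg(⟨F^top⟩) < ∞` and `G_hom` the reduced Gröbner
basis of `⟨F^h⟩` w.r.t. homogenized DRL: every monomial in `x_1,…,x_n` of degree
`D` is divisible by the leading monomial of some element of `(G_hom)_{≤ D}`;
moreover every `g ∈ (G_hom)_D` with nonzero top part has its top part equal to its
leading term. -/
theorem stmt16 {K : Type*} [Field K] {n M : ℕ}
    (f : Fin M → MvPolynomial (Fin n) K) (dg : Fin M → ℕ)
    (hdeg : ∀ i, (f i).totalDegree = dg i) (hpos : ∀ i, 0 < dg i)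
    (hArt : ∃ d : ℕ, ∀ g : MvPolynomial (Fin n) K, g.IsHomogeneous d →
      g ∈ Ideal.span (Set.range fun i => topPart (f i)))
    (m' : MonomialOrder (Fin (n + 1))) (hm' : IsDegRevLex m')
    (Gh : Finset (MvPolynomial (Fin (n + 1)) K))
    (hGh : IsReducedGB m' (Ideal.span (Set.range fun i => homog (f i))) Gh) :
    (∀ s : Fin n →₀ ℕ,
        s.degree = degReg K (Ideal.span (Set.range fun i => topPart (f i))) →
        ∃ g ∈ Gh,
          g.totalDegree ≤ degReg K (Ideal.span (Set.range fun i => topPart (f i))) ∧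
          lm m' g ≤ extX s) ∧
    (∀ g ∈ Gh,
        g.totalDegree = degReg K (Ideal.span (Set.range fun i => topPart (f i))) →
        setYZero g ≠ 0 →
        setYZero g =
          MvPolynomial.monomial (lm m' g) (MvPolynomial.coeff (lm m' g) g)) :=
  stmt16_general f hArt m' hm' Gh hGh
end
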